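/- arXiv:1509.06951 — 11 statements merged into one kernel-verified Lean document; each statement's English description precedes it below -/
import Mathlib

section
/- Let L be a finite-dimensional Lie algebra and let A/B and C/D be chief factors of L with A = B + C and B ∩ C = D. If M supplements A/B in L and K supplements B/D in L, then C + (M ∩ K) supplements the chief factor A/C in L, and M ∩ K supplements A/D in L. -/
section ChiefFactors

variable (K : Type*) (L : Type*) [Field K] [LieRing L] [LieAlgebra K L]

/-- `A/B` is a chief factor of `L`: `B` is an ideal and `A/B` is a minimal ideal of `L/B`,
i.e. `B < A` and there is no ideal strictly between `B` and `A`. -/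
def IsChiefFactor (A B : LieIdeal K L) : Prop :=
  B < A ∧ ∀ C : LieIdeal K L, B < C → C ≤ A → C = A

/-- The factor `A/B` is abelian. -/
def FactorAbelian (A B : LieIdeal K L) : Prop :=
  ∀ a ∈ A, ∀ a' ∈ A, ⁅a, a'⁆ ∈ B

/-- `M` is a maximal (proper) subalgebra of `L`. -/
def IsMaximalSubalgebra (M : LieSubalgebra K L) : Prop :=
  M ≠ ⊤ ∧ ∀ N : LieSubalgebra K L, M < N → N = ⊤

/-- `L = A + M`. -/
def SumIsTop (A : LieIdeal K L) (M : LieSubalgebra K L) : Prop :=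
  ∀ x : L, ∃ a ∈ A, ∃ m ∈ M, x = a + m

/-- `M` supplements the factor `A/B` : `L = A + M` and `B ⊆ A ∩ M`. -/
def Supplements (M : LieSubalgebra K L) (A B : LieIdeal K L) : Prop :=
  SumIsTop K L A M ∧ B ≤ A ∧ (B : Set L) ⊆ M

/-- `M` complements the factor `A/B` : `L = A + M` and `A ∩ M = B`. -/
def Complements (M : LieSubalgebra K L) (A B : LieIdeal K L) : Prop :=
  SumIsTop K L A M ∧ (A : Set L) ∩ M = B

/-- `A/B` is a supplemented chief factor (supplemented by a maximal subalgebra). -/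
def SupplementedFactor (A B : LieIdeal K L) : Prop :=
  ∃ M : LieSubalgebra K L, IsMaximalSubalgebra K L M ∧ Supplements K L M A B

/-- `A/B` is a Frattini chief factor: `A/B ⊆ φ(L/B)`, equivalently `A` is contained in
every maximal subalgebra of `L` containing `B`. -/
def FrattiniFactor (A B : LieIdeal K L) : Prop :=
  IsChiefFactor K L A B ∧
    ∀ M : LieSubalgebra K L, IsMaximalSubalgebra K L M → (B : Set L) ⊆ M → (A : Set L) ⊆ M

/-- `A/B ↘ C/D` : `A = B + C` and `B ∩ C = D`. -/
def Searrow (A B C D : LieIdeal K L) : Prop := A = B ⊔ C ∧ B ⊓ C = D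

/-- `[A/B ↘ C/D]` is an m-crossing. -/
def MCrossing (A B C D : LieIdeal K L) : Prop :=
  IsChiefFactor K L A B ∧ IsChiefFactor K L C D ∧ Searrow K L A B C D ∧
    FrattiniFactor K L A B ∧ SupplementedFactor K L C D

/-- The chief factors `A/B` and `C/D` are m-related. -/
def MRelated (A B C D : LieIdeal K L) : Prop :=
  (∃ R S, IsChiefFactor K L R S ∧ SupplementedFactor K L R S ∧
     Searrow K L R S A B ∧ Searrow K L R S C D) ∨
  (∃ U V W X, MCrossing K L U V W X ∧ Searrow K L V X A B ∧ Searrow K L W X C D) ∨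
  (∃ Y Z, FrattiniFactor K L Y Z ∧ Searrow K L A B Y Z ∧ Searrow K L C D Y Z) ∨
  (∃ U V W X, MCrossing K L U V W X ∧ Searrow K L A B U V ∧ Searrow K L C D U W)

/-- `I` is the core `M_L` of the subalgebra `M`: the largest ideal of `L` contained in `M`. -/
def IsCoreOf (I : LieIdeal K L) (M : LieSubalgebra K L) : Prop :=
  (I : Set L) ⊆ M ∧ ∀ J : LieIdeal K L, (J : Set L) ⊆ M → J ≤ I

/-- The quotient `L/I` is primitive: it has a core-free maximal subalgebra. -/
def QuotPrimitive (I : LieIdeal K L) : Prop :=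
  ∃ M : LieSubalgebra K L, IsMaximalSubalgebra K L M ∧ IsCoreOf K L I M

/-- The quotient `L/I` is monolithic: it has a unique minimal ideal. -/
def QuotMonolithic (I : LieIdeal K L) : Prop :=
  ∃! J : LieIdeal K L, IsChiefFactor K L J I

/-- `M` is a monolithic maximal subalgebra supplementing `A/B` :
`L/M_L` is a monolithic primitive Lie algebra. -/
def MonolithicSupplement (M : LieSubalgebra K L) (A B : LieIdeal K L) : Prop :=
  IsMaximalSubalgebra K L M ∧ Supplements K L M A B ∧
    ∃ I : LieIdeal K L, IsCoreOf K L I M ∧ QuotMonolithic K L I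

/-- `A/B` and `C/D` are `L`-isomorphic: there is an isomorphism of `L`-modules between
the factors which moreover preserves the induced Lie brackets. -/
def LIso (A B C D : LieIdeal K L) : Prop :=
  B ≤ A ∧ D ≤ C ∧
  ∃ e : (A ⧸ (LieSubmodule.comap (LieSubmodule.incl A) B)) ≃ₗ⁅K,L⁆
        (C ⧸ (LieSubmodule.comap (LieSubmodule.incl C) D)),
    ∀ (a a' : A) (c c' : C),
      e (LieSubmodule.Quotient.mk a) = LieSubmodule.Quotient.mk c →
      e (LieSubmodule.Quotient.mk a') = LieSubmodule.Quotient.mk c' →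
      e (LieSubmodule.Quotient.mk ⟨⁅(a : L), (a' : L)⁆, A.lie_mem a'.2⟩) =
        LieSubmodule.Quotient.mk ⟨⁅(c : L), (c' : L)⁆, C.lie_mem c'.2⟩

/-- `L/I` is a primitive Lie algebra of type 3 with (exactly two) minimal ideals
`J1/I` and `J2/I`, both non-abelian. -/
def QuotPrimitiveType3 (I J1 J2 : LieIdeal K L) : Prop :=
  QuotPrimitive K L I ∧ J1 ≠ J2 ∧ IsChiefFactor K L J1 I ∧ IsChiefFactor K L J2 I ∧
    ¬ FactorAbelian K L J1 I ∧ ¬ FactorAbelian K L J2 I ∧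
    ∀ J : LieIdeal K L, IsChiefFactor K L J I → J = J1 ∨ J = J2

/-- `A/B` and `C/D` are `L`-connected. -/
def LConnected (A B C D : LieIdeal K L) : Prop :=
  LIso K L A B C D ∨
    ∃ I J1 J2 : LieIdeal K L, QuotPrimitiveType3 K L I J1 J2 ∧
      LIso K L J1 I A B ∧ LIso K L J2 I C D

end ChiefFactors

variable {K : Type*} {L : Type*} [Field K] [LieRing L] [LieAlgebra K L]
variable [FiniteDimensional K L]

theorem stmt1 (A B C D : LieIdeal K L)
    (hAB : IsChiefFactor K L A B) (hCD : IsChiefFactor K L C D)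
    (hAC : IsChiefFactor K L A C) (hBD : IsChiefFactor K L B D)
    (hsup : A = B ⊔ C) (hinf : B ⊓ C = D)
    (M N : LieSubalgebra K L)
    (hM : Supplements K L M A B) (hN : Supplements K L N B D) :
    Supplements K L ((C : LieSubalgebra K L) ⊔ (M ⊓ N)) A C ∧
      Supplements K L (M ⊓ N) A D := by
  obtain ⟨hMtop, hBA, hBM⟩ := hM
  obtain ⟨hNtop, hDB, hDN⟩ := hN
  have key : SumIsTop K L A (M ⊓ N) := by
    intro x
    obtain ⟨a, ha, m, hm, hx⟩ := hMtop x
    obtain ⟨b, hb, n, hn, hmn⟩ := hNtop m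
    have hnM : n ∈ M := by
      have : n = m - b := by rw [hmn]; abel
      rw [this]
      exact M.sub_mem hm (hBM hb)
    refine ⟨a + b, A.add_mem ha (hBA hb), n, ⟨hnM, hn⟩, ?_⟩
    rw [hx, hmn]; abel
  have hCA : C ≤ A := by rw [hsup]; exact le_sup_right
  have hDA : D ≤ A := le_trans hDB hBA
  have hDMN : (D : Set L) ⊆ ((M ⊓ N : LieSubalgebra K L) : Set L) := fun x hx =>
    ⟨hBM (hDB hx), hDN hx⟩
  refine ⟨⟨?_, hCA, ?_⟩, key, hDA, hDMN⟩
  · intro x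
    obtain ⟨a, ha, n, hn, hx⟩ := key x
    exact ⟨a, ha, n, (le_sup_right : M ⊓ N ≤ _) hn, hx⟩
  · intro x hx
    exact (le_sup_left : (C : LieSubalgebra K L) ≤ _) hx
end

section
/- Let L be a finite-dimensional Lie algebra and let A/B and C/D be chief factors of L with A = B + C and B ∩ C = D. If M complements A/B in L (i.e. L = A + M and A ∩ M = B), then M complements C/D in L (i.e. L = C + M and C ∩ M = D). -/
variable {K : Type*} {L : Type*} [Field K] [LieRing L] [LieAlgebra K L]
variable [FiniteDimensional K L]

theorem stmt2 (A B C D : LieIdeal K L)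
    (hAB : IsChiefFactor K L A B) (hCD : IsChiefFactor K L C D)
    (hsup : A = B ⊔ C) (hinf : B ⊓ C = D)
    (M : LieSubalgebra K L) (hM : Complements K L M A B) :
    Complements K L M C D := by
  obtain ⟨htop, hint⟩ := hM
  have hBM : (B : Set L) ⊆ M := by
    intro x hx
    have : x ∈ (A : Set L) ∩ M := hint ▸ hx
    exact this.2
  have hBA : B ≤ A := hsup ▸ le_sup_left
  have hCA : C ≤ A := hsup ▸ le_sup_right
  constructor
  · intro x
    obtain ⟨a, ha, m, hm, hx⟩ := htop x
    have ha' : a ∈ B ⊔ C := hsup ▸ ha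
    obtain ⟨b, hb, c, hc, hbc⟩ := (LieSubmodule.mem_sup B C a).mp ha'
    refine ⟨c, hc, b + m, M.add_mem (hBM hb) hm, ?_⟩
    rw [hx, ← hbc]; abel
  · ext x
    constructor
    · rintro ⟨hxC, hxM⟩
      have hxB : x ∈ (B : Set L) := hint ▸ Set.mem_inter (hCA hxC) hxM
      have : x ∈ B ⊓ C := ⟨hxB, hxC⟩
      rw [hinf] at this; exact this
    · intro hx
      have : x ∈ B ⊓ C := hinf ▸ hx
      exact ⟨this.2, hBM this.1⟩
end

section
/- Let L be a finite-dimensional Lie algebra and let A/B and C/D be chief factors of L with A = B + C, B ∩ C = D, and C/D non-abelian. Then the set of monolithic maximal subalgebras supplementing C/D in L coincides with the set of monolithic maximal subalgebras supplementing A/B in L. -/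
variable {K : Type*} {L : Type*} [Field K] [LieRing L] [LieAlgebra K L]

lemma exists_isChiefFactor_le [IsArtinian K L] {I N : LieIdeal K L} (h : I < N) :
    ∃ X : LieIdeal K L, IsChiefFactor K L X I ∧ X ≤ N := by
  obtain ⟨X, ⟨hIX, hXN⟩, hmin⟩ :=
    (LieSubmodule.wellFoundedLT_of_isArtinian K L L).wf.has_min {X | I < X ∧ X ≤ N}
      ⟨N, h, le_rfl⟩
  exact ⟨X, ⟨hIX, fun Y hIY hYX => hYX.eq_of_not_lt (hmin Y ⟨hIY, hYX.trans hXN⟩)⟩, hXN⟩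

lemma IsChiefFactor.inf_eq_of_not_le {C D I : LieIdeal K L} (hCD : IsChiefFactor K L C D)
    (hDI : D ≤ I) (hCI : ¬ C ≤ I) : I ⊓ C = D := by
  rcases (le_inf hDI hCD.1.le).lt_or_eq with hlt | heq
  · exact absurd (inf_le_left.trans_eq' (hCD.2 _ hlt inf_le_right)) hCI
  · exact heq.symm

lemma IsChiefFactor.sup_of_not_le {C D I : LieIdeal K L} (hCD : IsChiefFactor K L C D)
    (hDI : D ≤ I) (hCI : ¬ C ≤ I) : IsChiefFactor K L (I ⊔ C) I := by
  refine ⟨left_lt_sup.mpr hCI, fun X hIX hXle => ?_⟩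
  have hX : X = I ⊔ C ⊓ X := by
    rw [← sup_inf_assoc_of_le C hIX.le, inf_eq_right.mpr hXle]
  rcases (le_inf hCD.1.le (hDI.trans hIX.le) : D ≤ C ⊓ X).lt_or_eq with hlt | heq
  · rw [hX, hCD.2 _ hlt inf_le_left]
  · rw [hX, ← heq, sup_eq_left.mpr hDI] at hIX
    exact absurd rfl hIX.ne

lemma lie_sup_sup_le {I B C : LieIdeal K L} (hBC : ⁅B, C⁆ ≤ I) :
    ⁅I ⊔ B, I ⊔ C⁆ ≤ I := by
  rw [LieSubmodule.sup_lie, LieSubmodule.lie_sup, LieSubmodule.lie_sup]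
  exact sup_le (sup_le (LieSubmodule.lie_le_left _ _) (LieSubmodule.lie_le_left _ _))
    (sup_le (LieSubmodule.lie_le_right _ _) hBC)

lemma SumIsTop.mono {C A : LieIdeal K L} {M : LieSubalgebra K L} (h : SumIsTop K L C M)
    (hCA : C ≤ A) : SumIsTop K L A M := fun x => by
  obtain ⟨c, hc, m, hm, rfl⟩ := h x
  exact ⟨c, hCA hc, m, hm, rfl⟩

lemma SumIsTop.of_sup_left {B C : LieIdeal K L} {M : LieSubalgebra K L}
    (h : SumIsTop K L (B ⊔ C) M) (hBM : (B : Set L) ⊆ M) : SumIsTop K L C M := fun x => by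
  obtain ⟨a, ha, m, hm, rfl⟩ := h x
  obtain ⟨b, hb, c, hc, rfl⟩ := LieSubmodule.mem_sup _ _ _ |>.mp ha
  exact ⟨c, hc, b + m, M.add_mem (hBM hb) hm, by abel⟩

lemma SumIsTop.not_subset {C : LieIdeal K L} {M : LieSubalgebra K L} (h : SumIsTop K L C M)
    (hM : M ≠ ⊤) : ¬ (C : Set L) ⊆ M := fun hCM => hM <| eq_top_iff.mpr fun x _ => by
  obtain ⟨c, hc, m, hm, rfl⟩ := h x
  exact M.add_mem (hCM hc) hm

lemma le_of_lie_le_of_monolith [IsArtinian K L] {I B C D : LieIdeal K L}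
    (hmono : ∀ X, IsChiefFactor K L X I → X = I ⊔ C) (hCD : IsChiefFactor K L C D)
    (hna : ¬ FactorAbelian K L C D) (hDI : D ≤ I) (hCI : ¬ C ≤ I) (hBC : ⁅B, C⁆ ≤ I) :
    B ≤ I := by
  by_contra hBI
  obtain ⟨X, hX, hXle⟩ := exists_isChiefFactor_le (left_lt_sup.mpr hBI)
  have hIC_le : I ⊔ C ≤ I ⊔ B := hmono X hX ▸ hXle
  refine hna fun a ha a' ha' => ?_
  rw [← hCD.inf_eq_of_not_le hDI hCI]
  exact ⟨lie_sup_sup_le hBC (LieSubmodule.lie_mem_lie (hIC_le (le_sup_right (a := I) ha))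
    (le_sup_right (a := I) ha')), C.lie_mem ha'⟩

lemma MonolithicSupplement.subset_of_lie_le [IsArtinian K L] {M : LieSubalgebra K L}
    {B C D : LieIdeal K L}
    (hM : MonolithicSupplement K L M C D)
    (hCD : IsChiefFactor K L C D) (hna : ¬ FactorAbelian K L C D) (hBC : ⁅B, C⁆ ≤ D) :
    (B : Set L) ⊆ M := by
  obtain ⟨hmax, ⟨hsum, -, hDM⟩, I, hcore, J, -, hJ⟩ := hM
  have hDI : D ≤ I := hcore.2 D hDM
  have hCI : ¬ C ≤ I := fun h => hsum.not_subset hmax.1 fun x hx => hcore.1 (h hx)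
  have hmono : ∀ X, IsChiefFactor K L X I → X = I ⊔ C := fun X hX =>
    (hJ X hX).trans (hJ _ (hCD.sup_of_not_le hDI hCI)).symm
  exact fun x hx => hcore.1 (le_of_lie_le_of_monolith hmono hCD hna hDI hCI (hBC.trans hDI) hx)

variable [FiniteDimensional K L]

theorem stmt3_general (A B C D : LieIdeal K L)
    (hCD : IsChiefFactor K L C D)
    (hsup : A = B ⊔ C) (hinf : B ⊓ C = D)
    (hna : ¬ FactorAbelian K L C D) :
    ∀ M : LieSubalgebra K L,
      MonolithicSupplement K L M C D ↔ MonolithicSupplement K L M A B := by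
  intro M
  subst hsup
  have hDB : D ≤ B := hinf ▸ inf_le_left
  constructor
  · intro hM
    have hBM := hM.subset_of_lie_le hCD hna (hinf ▸ LieSubmodule.lie_le_inf B C)
    obtain ⟨hmax, ⟨hsum, -, -⟩, hmono⟩ := hM
    exact ⟨hmax, ⟨hsum.mono le_sup_right, le_sup_left, hBM⟩, hmono⟩
  · rintro ⟨hmax, ⟨hsum, -, hBM⟩, hmono⟩
    exact ⟨hmax, ⟨hsum.of_sup_left hBM, hCD.1.le, fun x hx => hBM (hDB hx)⟩, hmono⟩

theorem stmt3 (A B C D : LieIdeal K L)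
    (hAB : IsChiefFactor K L A B) (hCD : IsChiefFactor K L C D)
    (hsup : A = B ⊔ C) (hinf : B ⊓ C = D)
    (hna : ¬ FactorAbelian K L C D) :
    ∀ M : LieSubalgebra K L,
      MonolithicSupplement K L M C D ↔ MonolithicSupplement K L M A B :=
  stmt3_general A B C D hCD hsup hinf hna
end

section
/- Let L be a finite-dimensional Lie algebra with ideals D ⊆ B ⊆ A and D ⊆ C ⊆ A, where A = B + C, B ∩ C = D, C/D is a non-abelian chief factor of L and B/D is an abelian chief factor of L. Then a subalgebra M complements B/D in L if and only if M complements A/C in L. -/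
variable {K : Type*} {L : Type*} [Field K] [LieRing L] [LieAlgebra K L]
variable [FiniteDimensional K L]

theorem stmt4 (A B C D : LieIdeal K L)
    (hDB : D ≤ B) (hBA : B ≤ A) (hDC : D ≤ C) (hCA : C ≤ A)
    (hsup : A = B ⊔ C) (hinf : B ⊓ C = D)
    (hCD : IsChiefFactor K L C D) (hnaCD : ¬ FactorAbelian K L C D)
    (hBD : IsChiefFactor K L B D) (habBD : FactorAbelian K L B D) :
    ∀ M : LieSubalgebra K L,
      Complements K L M B D ↔ Complements K L M A C := by
  intro M
  have memD : ∀ x : L, x ∈ B → x ∈ C → x ∈ D := by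
    intro x hxB hxC
    rw [← hinf]
    exact ⟨hxB, hxC⟩
  constructor
  · rintro ⟨hsum, hBM⟩
    have hDM : (D : Set L) ⊆ M := by
      intro x hx
      have : x ∈ (B : Set L) ∩ M := hBM ▸ hx
      exact this.2
    -- bracket of a B-element with a C-element lands in D
    have hBCmem : ∀ b ∈ B, ∀ c ∈ C, ⁅b, c⁆ ∈ D := by
      intro b hb c hc
      refine memD _ ?_ (C.lie_mem hc)
      have : ⁅c, b⁆ ∈ B := B.lie_mem hb
      have h := neg_mem this
      rwa [lie_skew] at h
    -- key: brackets of C-elements lie in M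
    have key : ∀ c ∈ C, ∀ c' ∈ C, ⁅c, c'⁆ ∈ M := by
      intro c hc c' hc'
      obtain ⟨b, hb, m, hm, hcm⟩ := hsum c
      obtain ⟨b', hb', m', hm', hcm'⟩ := hsum c'
      have h1 : ⁅b, c'⁆ ∈ M := hDM (hBCmem b hb c' hc')
      have h2 : ⁅m, b'⁆ ∈ M := by
        have : ⁅m, b'⁆ = ⁅c, b'⁆ - ⁅b, b'⁆ := by rw [hcm, add_lie]; abel
        rw [this]
        have hc1 : ⁅c, b'⁆ ∈ D := by
          refine memD _ (B.lie_mem hb') ?_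
          have : ⁅b', c⁆ ∈ C := C.lie_mem hc
          have h := neg_mem this
          rwa [lie_skew] at h
        have hc2 : ⁅b, b'⁆ ∈ D := habBD b hb b' hb'
        exact sub_mem (hDM hc1) (hDM hc2)
      have h3 : ⁅m, m'⁆ ∈ M := M.lie_mem hm hm'
      have : ⁅c, c'⁆ = ⁅b, c'⁆ + (⁅m, b'⁆ + ⁅m, m'⁆) := by
        simp only [hcm, hcm', add_lie, lie_add]
        abel
      rw [this]
      exact add_mem h1 (add_mem h2 h3)
    -- C ∩ M is an ideal
    let N : LieIdeal K L :=
      { toSubmodule := C.toSubmodule ⊓ (M : Submodule K L)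
        lie_mem := by
          rintro x m ⟨hmC, hmM⟩
          obtain ⟨b, hb, mx, hmx, hxm⟩ := hsum x
          have h1 : ⁅b, m⁆ ∈ M := hDM (hBCmem b hb m hmC)
          have h2 : ⁅mx, m⁆ ∈ M := M.lie_mem hmx hmM
          constructor
          · exact C.lie_mem hmC
          · show ⁅x, m⁆ ∈ M
            have : ⁅x, m⁆ = ⁅b, m⁆ + ⁅mx, m⁆ := by rw [hxm, add_lie]
            rw [this]; exact add_mem h1 h2 }
    have hNC : N ≤ C := fun x hx => hx.1
    have hDN : D < N := by
      refine lt_of_le_of_ne (fun x hx => ⟨hDC hx, hDM hx⟩) ?_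
      intro hE
      apply hnaCD
      intro a ha a' ha'
      have : ⁅a, a'⁆ ∈ N := ⟨C.lie_mem ha', key a ha a' ha'⟩
      rwa [← hE] at this
    have hNeq : N = C := hCD.2 N hDN hNC
    have hCM : (C : Set L) ⊆ M := by
      intro x hx
      have : x ∈ N := hNeq ▸ hx
      exact this.2
    constructor
    · intro x
      obtain ⟨b, hb, m, hm, hxm⟩ := hsum x
      exact ⟨b, hBA hb, m, hm, hxm⟩
    · ext x
      constructor
      · rintro ⟨hxA, hxM⟩
        have hxA' : x ∈ B ⊔ C := by rw [← hsup]; exact hxA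
        rw [LieSubmodule.mem_sup] at hxA'
        obtain ⟨b, hb, c, hc, hbc⟩ := hxA'
        have hbM : b ∈ M := by
          have : b = x - c := by rw [← hbc]; abel
          rw [this]
          exact sub_mem hxM (hCM hc)
        have hbD : b ∈ D := by
          have : b ∈ (B : Set L) ∩ M := ⟨hb, hbM⟩
          rw [hBM] at this
          exact this
        show x ∈ C
        rw [← hbc]
        exact add_mem (hDC hbD) hc
      · intro hx
        exact ⟨hCA hx, hCM hx⟩
  · rintro ⟨hsum, hAM⟩
    have hCM : (C : Set L) ⊆ M := by
      intro x hx
      have : x ∈ (A : Set L) ∩ M := hAM ▸ hx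
      exact this.2
    constructor
    · intro x
      obtain ⟨a, ha, m, hm, hxm⟩ := hsum x
      have ha' : a ∈ B ⊔ C := by rw [← hsup]; exact ha
      rw [LieSubmodule.mem_sup] at ha'
      obtain ⟨b, hb, c, hc, hbc⟩ := ha'
      refine ⟨b, hb, c + m, add_mem (hCM hc) hm, ?_⟩
      rw [hxm, ← hbc]; abel
    · ext x
      constructor
      · rintro ⟨hxB, hxM⟩
        have hxC : x ∈ (A : Set L) ∩ M := ⟨hBA hxB, hxM⟩
        rw [hAM] at hxC
        exact memD x hxB hxC
      · intro hx
        exact ⟨hDB hx, hCM (hDC hx)⟩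
end

section
/- Let L be a finite-dimensional Lie algebra, let A/B be an abelian chief factor of L, and let U and S be maximal subalgebras of L with U_L ≠ S_L, both supplementing A/B. Then M = A + (U ∩ S) is a maximal subalgebra of L with core M_L = A + (U_L ∩ S_L), M complements both chief factors U_L/(U_L ∩ S_L) and S_L/(U_L ∩ S_L), and M ∩ U = M ∩ S = U ∩ S. -/
variable {K : Type*} {L : Type*} [Field K] [LieRing L] [LieAlgebra K L]
variable [FiniteDimensional K L]

set_option linter.unusedSectionVars false

section Aux

lemma lieMemRight (A : LieIdeal K L) {a : L} (x : L) (h : a ∈ A) : ⁅a, x⁆ ∈ A := by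
  rw [← lie_skew]; exact neg_mem (A.lie_mem h)

/-- Sum of an ideal and a subalgebra, as a subalgebra. -/
def sumSA (A : LieIdeal K L) (W : LieSubalgebra K L) : LieSubalgebra K L where
  toSubmodule := (A : Submodule K L) ⊔ W.toSubmodule
  lie_mem' := by
    intro x y hx hy
    replace hx : x ∈ (A : Submodule K L) ⊔ W.toSubmodule := hx
    replace hy : y ∈ (A : Submodule K L) ⊔ W.toSubmodule := hy
    show ⁅x, y⁆ ∈ (A : Submodule K L) ⊔ W.toSubmodule
    rw [Submodule.mem_sup] at hx hy
    obtain ⟨a, ha, w, hw, rfl⟩ := hx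
    obtain ⟨a', ha', w', hw', rfl⟩ := hy
    have h1 : ⁅a + w, a' + w'⁆ = (⁅a, a'⁆ + ⁅a, w'⁆ + ⁅w, a'⁆) + ⁅w, w'⁆ := by
      rw [lie_add, add_lie, add_lie]; abel
    rw [h1]
    refine add_mem (Submodule.mem_sup_left ?_) (Submodule.mem_sup_right (W.lie_mem' hw hw'))
    exact add_mem (add_mem (A.lie_mem ha') (lieMemRight A w' ha)) (A.lie_mem ha')

lemma mem_sumSA {A : LieIdeal K L} {W : LieSubalgebra K L} {x : L} :
    x ∈ sumSA A W ↔ ∃ a ∈ A, ∃ w ∈ W, x = a + w := by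
  show x ∈ (A : Submodule K L) ⊔ W.toSubmodule ↔ _
  rw [Submodule.mem_sup]
  constructor
  · rintro ⟨a, ha, w, hw, rfl⟩; exact ⟨a, ha, w, hw, rfl⟩
  · rintro ⟨a, ha, w, hw, rfl⟩; exact ⟨a, ha, w, hw, rfl⟩

lemma sup_eq_sumSA (A : LieIdeal K L) (W : LieSubalgebra K L) :
    (A : LieSubalgebra K L) ⊔ W = sumSA A W := by
  apply le_antisymm
  · refine sup_le ?_ ?_ <;> intro x hx <;> rw [mem_sumSA]
    · exact ⟨x, hx, 0, zero_mem W, (add_zero x).symm⟩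
    · exact ⟨0, zero_mem A, x, hx, (zero_add x).symm⟩
  · intro x hx
    rw [mem_sumSA] at hx
    obtain ⟨a, ha, w, hw, rfl⟩ := hx
    exact add_mem (le_sup_left (a := (A : LieSubalgebra K L)) ha)
      (le_sup_right (b := W) hw)

/-- Intersection of an ideal and a subalgebra which happens to be an ideal. -/
def interIdeal (A : LieIdeal K L) (U : LieSubalgebra K L)
    (h : ∀ x y : L, y ∈ A → y ∈ U → ⁅x, y⁆ ∈ A ∧ ⁅x, y⁆ ∈ U) : LieIdeal K L where
  toSubmodule := (A : Submodule K L) ⊓ U.toSubmodule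
  lie_mem := fun {x m} hm => by
    have hm' : m ∈ A ∧ m ∈ U := hm
    exact h x m hm'.1 hm'.2

lemma mem_interIdeal {A : LieIdeal K L} {U : LieSubalgebra K L}
    {h : ∀ x y : L, y ∈ A → y ∈ U → ⁅x, y⁆ ∈ A ∧ ⁅x, y⁆ ∈ U} {x : L} :
    x ∈ interIdeal A U h ↔ x ∈ A ∧ x ∈ U := Iff.rfl

/-- The centralizer of the factor `A/B`. -/
def cent (A B : LieIdeal K L) : LieIdeal K L where
  carrier := {x : L | ∀ a ∈ A, ⁅x, a⁆ ∈ B}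
  add_mem' := fun {x y} hx hy a ha => by
    rw [add_lie]; exact add_mem (hx a ha) (hy a ha)
  zero_mem' := fun a ha => by rw [zero_lie]; exact zero_mem B
  smul_mem' := fun c x hx a ha => by
    rw [smul_lie]; exact Submodule.smul_mem _ c (hx a ha)
  lie_mem := fun {x m} hm a ha => by
    rw [lie_lie]; exact sub_mem (B.lie_mem (hm a ha)) (hm _ (A.lie_mem ha))

lemma mem_cent {A B : LieIdeal K L} {x : L} :
    x ∈ cent A B ↔ ∀ a ∈ A, ⁅x, a⁆ ∈ B := Iff.rfl

end Aux

theorem stmt5 (A B : LieIdeal K L)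
    (hAB : IsChiefFactor K L A B) (hab : FactorAbelian K L A B)
    (U S : LieSubalgebra K L) (UL SL : LieIdeal K L)
    (hU : IsMaximalSubalgebra K L U) (hS : IsMaximalSubalgebra K L S)
    (hUL : IsCoreOf K L UL U) (hSL : IsCoreOf K L SL S) (hne : UL ≠ SL)
    (hUsupp : Supplements K L U A B) (hSsupp : Supplements K L S A B) :
    IsMaximalSubalgebra K L ((A : LieSubalgebra K L) ⊔ (U ⊓ S)) ∧
    IsCoreOf K L (A ⊔ (UL ⊓ SL)) ((A : LieSubalgebra K L) ⊔ (U ⊓ S)) ∧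
    IsChiefFactor K L UL (UL ⊓ SL) ∧
    Complements K L ((A : LieSubalgebra K L) ⊔ (U ⊓ S)) UL (UL ⊓ SL) ∧
    IsChiefFactor K L SL (UL ⊓ SL) ∧
    Complements K L ((A : LieSubalgebra K L) ⊔ (U ⊓ S)) SL (UL ⊓ SL) ∧
    ((A : LieSubalgebra K L) ⊔ (U ⊓ S)) ⊓ U = U ⊓ S ∧
    ((A : LieSubalgebra K L) ⊔ (U ⊓ S)) ⊓ S = U ⊓ S := by
  obtain ⟨hUtop, hUmax⟩ := hU
  obtain ⟨hStop, hSmax⟩ := hS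
  obtain ⟨hUsum, hBA, hBU⟩ := hUsupp
  obtain ⟨hSsum, -, hBS⟩ := hSsupp
  obtain ⟨hULU, hULmax⟩ := hUL
  obtain ⟨hSLS, hSLmax⟩ := hSL
  -- notation
  set D : LieIdeal K L := UL ⊓ SL with hDdef
  have hDUL : ∀ x ∈ D, x ∈ UL := fun x hx => hx.1
  have hDSL : ∀ x ∈ D, x ∈ SL := fun x hx => hx.2
  have hmemD : ∀ x : L, x ∈ UL → x ∈ SL → x ∈ D := fun x h1 h2 => ⟨h1, h2⟩
  -- B below the cores
  have hBUL : B ≤ UL := hULmax B hBU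
  have hBSL : B ≤ SL := hSLmax B hBS
  have hBD : ∀ x ∈ B, x ∈ D := fun x hx => ⟨hBUL hx, hBSL hx⟩
  -- A is not contained in U nor S
  have hAnotU : ¬ (∀ a ∈ A, a ∈ U) := by
    intro h
    apply hUtop
    rw [eq_top_iff]
    intro x _
    obtain ⟨a, ha, m, hm, rfl⟩ := hUsum x
    exact add_mem (h a ha) hm
  have hAnotS : ¬ (∀ a ∈ A, a ∈ S) := by
    intro h
    apply hStop
    rw [eq_top_iff]
    intro x _
    obtain ⟨a, ha, m, hm, rfl⟩ := hSsum x
    exact add_mem (h a ha) hm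
  -- A ∩ U = B and A ∩ S = B
  have interAB : ∀ (W : LieSubalgebra K L), (∀ x : L, ∃ a ∈ A, ∃ m ∈ W, x = a + m) →
      ((B : Set L) ⊆ W) → ¬ (∀ a ∈ A, a ∈ W) → ∀ x, x ∈ A → x ∈ W → x ∈ B := by
    intro W hWsum hBW hAnotW
    have hclos : ∀ x y : L, y ∈ A → y ∈ W → ⁅x, y⁆ ∈ A ∧ ⁅x, y⁆ ∈ W := by
      intro x y hyA hyW
      obtain ⟨a, ha, m, hm, rfl⟩ := hWsum x
      rw [add_lie]
      have h1 : ⁅a, y⁆ ∈ B := hab a ha y hyA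
      constructor
      · exact add_mem (hBA h1) (A.lie_mem hyA)
      · exact add_mem (hBW h1) (W.lie_mem' hm hyW)
    set T : LieIdeal K L := interIdeal A W hclos with hTdef
    intro x hxA hxW
    by_contra hxB
    have hBT : B < T := by
      refine lt_of_le_of_ne (fun y hy => ⟨hBA hy, hBW hy⟩) ?_
      intro h
      exact hxB (h ▸ (⟨hxA, hxW⟩ : x ∈ T))
    have hTA : T ≤ A := fun y hy => hy.1
    have := hAB.2 T hBT hTA
    exact hAnotW fun a ha => (this ▸ ha : a ∈ T).2
  have hAUB : ∀ x, x ∈ A → x ∈ U → x ∈ B := interAB U hUsum hBU hAnotU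
  have hASB : ∀ x, x ∈ A → x ∈ S → x ∈ B := interAB S hSsum hBS hAnotS
  -- the centralizer Z of A/B
  set Z : LieIdeal K L := cent A B with hZdef
  have hAZ : ∀ x ∈ A, x ∈ Z := fun x hx a ha => hab x hx a ha
  have hBZ : ∀ x ∈ B, x ∈ Z := fun x hx => hAZ x (hBA hx)
  have hULZ : ∀ x ∈ UL, x ∈ Z := by
    intro x hx a ha
    exact hAUB _ (A.lie_mem ha) (hULU (lieMemRight UL a hx))
  have hSLZ : ∀ x ∈ SL, x ∈ Z := by
    intro x hx a ha
    exact hASB _ (A.lie_mem ha) (hSLS (lieMemRight SL a hx))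
  -- Z ∩ U ≤ UL, Z ∩ S ≤ SL
  have centClos : ∀ (W : LieSubalgebra K L), (∀ x : L, ∃ a ∈ A, ∃ m ∈ W, x = a + m) →
      ((B : Set L) ⊆ W) → ∀ x y : L, y ∈ Z → y ∈ W → ⁅x, y⁆ ∈ Z ∧ ⁅x, y⁆ ∈ W := by
    intro W hWsum hBW x y hyZ hyW
    obtain ⟨a, ha, m, hm, rfl⟩ := hWsum x
    rw [add_lie]
    have h1 : ⁅a, y⁆ ∈ B := by
      rw [← lie_skew]; exact neg_mem (hyZ a ha)
    exact ⟨add_mem (hBZ _ h1) (Z.lie_mem hyZ), add_mem (hBW h1) (W.lie_mem' hm hyW)⟩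
  have hZU_UL : ∀ x, x ∈ Z → x ∈ U → x ∈ UL := by
    intro x h1 h2
    exact hULmax (interIdeal Z U (centClos U hUsum hBU)) (fun y hy => hy.2) ⟨h1, h2⟩
  have hZS_SL : ∀ x, x ∈ Z → x ∈ S → x ∈ SL := by
    intro x h1 h2
    exact hSLmax (interIdeal Z S (centClos S hSsum hBS)) (fun y hy => hy.2) ⟨h1, h2⟩
  -- Z = A + UL = A + SL
  have hZdecompU : ∀ z ∈ Z, ∃ a ∈ A, ∃ u ∈ UL, z = a + u := by
    intro z hz
    obtain ⟨a, ha, m, hm, rfl⟩ := hUsum z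
    have hmZ : m ∈ Z := by
      have : m = (a + m) - a := by abel
      rw [this]
      exact sub_mem hz (hAZ a ha)
    exact ⟨a, ha, m, hZU_UL m hmZ hm, rfl⟩
  have hZdecompS : ∀ z ∈ Z, ∃ a ∈ A, ∃ u ∈ SL, z = a + u := by
    intro z hz
    obtain ⟨a, ha, m, hm, rfl⟩ := hSsum z
    have hmZ : m ∈ Z := by
      have : m = (a + m) - a := by abel
      rw [this]
      exact sub_mem hz (hAZ a ha)
    exact ⟨a, ha, m, hZS_SL m hmZ hm, rfl⟩
  -- UL ⊄ S and SL ⊄ U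
  have coreNot : ∀ x ∈ UL, x ∈ S → UL = SL → False := fun _ _ _ h => hne h
  have hULnotS : ¬ (∀ x ∈ UL, x ∈ S) := by
    intro h
    have h1 : UL ≤ SL := hSLmax UL h
    have h2 : SL ≤ UL := by
      intro s hs
      obtain ⟨a, ha, u, hu, rfl⟩ := hZdecompU s (hSLZ s hs)
      have haSL : a ∈ SL := by
        have he : a = (a + u) - u := by abel
        rw [he]
        exact sub_mem hs (h1 hu)
      have haB : a ∈ B := hASB a ha (hSLS haSL)
      exact add_mem (hBUL haB) hu
    exact hne (le_antisymm h1 h2)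
  have hSLnotU : ¬ (∀ x ∈ SL, x ∈ U) := by
    intro h
    have h1 : SL ≤ UL := hULmax SL h
    have h2 : UL ≤ SL := by
      intro s hs
      obtain ⟨a, ha, u, hu, rfl⟩ := hZdecompS s (hULZ s hs)
      have haUL : a ∈ UL := by
        have he : a = (a + u) - u := by abel
        rw [he]
        exact sub_mem hs (h1 hu)
      have haB : a ∈ B := hAUB a ha (hULU haUL)
      exact add_mem (hBSL haB) hu
    exact hne (le_antisymm h2 h1)
  -- L = J + S for any ideal J not contained in S (and symmetrically)
  have idealSum : ∀ (W : LieSubalgebra K L), (W ≠ ⊤ ∧ ∀ N : LieSubalgebra K L, W < N → N = ⊤) →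
      ∀ (J : LieIdeal K L), ¬ (∀ x ∈ J, x ∈ W) → ∀ x : L, ∃ u ∈ J, ∃ s ∈ W, x = u + s := by
    intro W hWm J hJW x
    push_neg at hJW
    obtain ⟨j0, hj0J, hj0W⟩ := hJW
    have hlt : W < sumSA J W := by
      refine lt_of_le_of_ne (fun y hy => mem_sumSA.mpr ⟨0, zero_mem J, y, hy, (zero_add y).symm⟩) ?_
      intro h
      exact hj0W (h ▸ (mem_sumSA.mpr ⟨j0, hj0J, 0, zero_mem W, (add_zero j0).symm⟩))
    have htop := hWm.2 _ hlt
    have : x ∈ sumSA J W := htop ▸ trivial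
    exact mem_sumSA.mp this
  have hULS : ∀ x : L, ∃ u ∈ UL, ∃ s ∈ S, x = u + s :=
    idealSum S ⟨hStop, hSmax⟩ UL hULnotS
  have hSLU : ∀ x : L, ∃ u ∈ SL, ∃ s ∈ U, x = u + s :=
    idealSum U ⟨hUtop, hUmax⟩ SL hSLnotU
  -- UL ∩ S = D = SL ∩ U
  have hULSD : ∀ x, x ∈ UL → x ∈ S → x ∈ D :=
    fun x h1 h2 => ⟨h1, hZS_SL x (hULZ x h1) h2⟩
  have hSLUD : ∀ x, x ∈ SL → x ∈ U → x ∈ D :=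
    fun x h1 h2 => ⟨hZU_UL x (hSLZ x h1) h2, h1⟩
  -- [Z, Z] ≤ D
  have hZZ : ∀ x ∈ Z, ∀ y ∈ Z, ⁅x, y⁆ ∈ D := by
    intro x hx y hy
    constructor
    · obtain ⟨a, ha, u, hu, rfl⟩ := hZdecompU x hx
      obtain ⟨a', ha', u', hu', rfl⟩ := hZdecompU y hy
      have he : ⁅a + u, a' + u'⁆ = ⁅a, a' + u'⁆ + (⁅u, a'⁆ + ⁅u, u'⁆) := by
        rw [add_lie]; congr 1; rw [lie_add]
      rw [he]
      refine add_mem (hBUL ?_) (add_mem (hBUL (hULZ u hu a' ha')) (UL.lie_mem hu'))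
      rw [← lie_skew]
      exact neg_mem (hy a ha)
    · obtain ⟨a, ha, u, hu, rfl⟩ := hZdecompS x hx
      obtain ⟨a', ha', u', hu', rfl⟩ := hZdecompS y hy
      have he : ⁅a + u, a' + u'⁆ = ⁅a, a' + u'⁆ + (⁅u, a'⁆ + ⁅u, u'⁆) := by
        rw [add_lie]; congr 1; rw [lie_add]
      rw [he]
      refine add_mem (hBSL ?_) (add_mem (hBSL (hSLZ u hu a' ha')) (SL.lie_mem hu'))
      rw [← lie_skew]
      exact neg_mem (hy a ha)
  -- chief factors UL/D and SL/D
  have hDltUL : D < UL := by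
    refine lt_of_le_of_ne inf_le_left ?_
    intro h
    exact hULnotS fun x hx => hSLS (hDSL x (h ▸ hx))
  have hDltSL : D < SL := by
    refine lt_of_le_of_ne inf_le_right ?_
    intro h
    exact hSLnotU fun x hx => hULU (hDUL x (h ▸ hx))
  have hULchief : IsChiefFactor K L UL D := by
    refine ⟨hDltUL, ?_⟩
    intro C hDC hCUL
    have hCnotS : ¬ (∀ x ∈ C, x ∈ S) := by
      intro h
      have h1 : C ≤ SL := hSLmax C h
      have h2 : C ≤ D := fun x hx => ⟨hCUL hx, h1 hx⟩
      exact hDC.not_ge h2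
    have hsum := idealSum S ⟨hStop, hSmax⟩ C hCnotS
    refine le_antisymm hCUL ?_
    intro x hx
    obtain ⟨j, hj, s, hs, rfl⟩ := hsum x
    have hsUL : s ∈ UL := by
      have he : s = (j + s) - j := by abel
      rw [he]
      exact sub_mem hx (hCUL hj)
    exact add_mem hj (hDC.le (hULSD s hsUL hs))
  have hSLchief : IsChiefFactor K L SL D := by
    refine ⟨hDltSL, ?_⟩
    intro C hDC hCSL
    have hCnotU : ¬ (∀ x ∈ C, x ∈ U) := by
      intro h
      have h1 : C ≤ UL := hULmax C h
      have h2 : C ≤ D := fun x hx => ⟨h1 hx, hCSL hx⟩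
      exact hDC.not_ge h2
    have hsum := idealSum U ⟨hUtop, hUmax⟩ C hCnotU
    refine le_antisymm hCSL ?_
    intro x hx
    obtain ⟨j, hj, s, hs, rfl⟩ := hsum x
    have hsSL : s ∈ SL := by
      have he : s = (j + s) - j := by abel
      rw [he]
      exact sub_mem hx (hCSL hj)
    exact add_mem hj (hDC.le (hSLUD s hsSL hs))
  -- the subalgebra M = A + (U ∩ S)
  set M : LieSubalgebra K L := (A : LieSubalgebra K L) ⊔ (U ⊓ S) with hMdef
  have hUSmem : ∀ x : L, x ∈ U ⊓ S ↔ x ∈ U ∧ x ∈ S := fun x => Iff.rfl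
  have hMmem : ∀ x : L, x ∈ M ↔ ∃ a ∈ A, ∃ w ∈ U ⊓ S, x = a + w := by
    intro x
    rw [hMdef, sup_eq_sumSA]
    exact mem_sumSA
  have hAM : ∀ x ∈ A, x ∈ M := fun x hx =>
    (hMmem x).mpr ⟨x, hx, 0, zero_mem _, (add_zero x).symm⟩
  have hUSM : ∀ x : L, x ∈ U → x ∈ S → x ∈ M := fun x h1 h2 =>
    (hMmem x).mpr ⟨0, zero_mem A, x, ⟨h1, h2⟩, (zero_add x).symm⟩
  have hBM : ∀ x ∈ B, x ∈ M := fun x hx => hUSM x (hBU hx) (hBS hx)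
  have hDM : ∀ x ∈ D, x ∈ M := fun x hx => hUSM x (hULU (hDUL x hx)) (hSLS (hDSL x hx))
  -- M ∩ U = U ∩ S = M ∩ S
  have hMU : ∀ x, x ∈ M → x ∈ U → x ∈ U ∧ x ∈ S := by
    intro x hxM hxU
    obtain ⟨a, ha, w, hw, rfl⟩ := (hMmem _).mp hxM
    have haU : a ∈ U := by
      have he : a = (a + w) - w := by abel
      rw [he]
      exact sub_mem hxU hw.1
    have haB : a ∈ B := hAUB a ha haU
    exact ⟨add_mem haU hw.1, add_mem (hBS haB) hw.2⟩
  have hMS : ∀ x, x ∈ M → x ∈ S → x ∈ U ∧ x ∈ S := by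
    intro x hxM hxS
    obtain ⟨a, ha, w, hw, rfl⟩ := (hMmem _).mp hxM
    have haS : a ∈ S := by
      have he : a = (a + w) - w := by abel
      rw [he]
      exact sub_mem hxS hw.2
    have haB : a ∈ B := hASB a ha haS
    exact ⟨add_mem (hBU haB) hw.1, add_mem haS hw.2⟩
  have hMUL : ∀ x, x ∈ M → x ∈ UL → x ∈ D := by
    intro x hxM hxUL
    have h1 := hMU x hxM (hULU hxUL)
    exact hULSD x hxUL h1.2
  have hMSL : ∀ x, x ∈ M → x ∈ SL → x ∈ D := by
    intro x hxM hxSL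
    have h1 := hMS x hxM (hSLS hxSL)
    exact hSLUD x hxSL h1.1
  have hMZ : ∀ x, x ∈ M → x ∈ Z → ∃ a ∈ A, ∃ d ∈ D, x = a + d := by
    intro x hxM hxZ
    obtain ⟨a, ha, w, hw, rfl⟩ := (hMmem _).mp hxM
    have hwZ : w ∈ Z := by
      have he : w = (a + w) - a := by abel
      rw [he]
      exact sub_mem hxZ (hAZ a ha)
    exact ⟨a, ha, w, hULSD w (hZU_UL w hwZ hw.1) hw.2, rfl⟩
  -- L = UL + M and L = SL + M
  have hULM : ∀ x : L, ∃ u ∈ UL, ∃ m ∈ M, x = u + m := by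
    intro x
    obtain ⟨u, hu, s, hs, rfl⟩ := hULS x
    obtain ⟨t, ht, v, hv, hsv⟩ := hSLU s
    have hvS : v ∈ S := by
      have he : v = s - t := by rw [hsv]; abel
      rw [he]
      exact sub_mem hs (hSLS ht)
    obtain ⟨a, ha, u', hu', htu⟩ := hZdecompU t (hSLZ t ht)
    refine ⟨u + u', add_mem hu hu', a + v, (hMmem _).mpr ⟨a, ha, v, ⟨hv, hvS⟩, rfl⟩, ?_⟩
    rw [hsv, htu]; abel
  have hSLM : ∀ x : L, ∃ u ∈ SL, ∃ m ∈ M, x = u + m := by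
    intro x
    obtain ⟨t, ht, v, hv, rfl⟩ := hSLU x
    obtain ⟨u', hu', s', hs', hvs⟩ := hULS v
    have hsU : s' ∈ U := by
      have he : s' = v - u' := by rw [hvs]; abel
      rw [he]
      exact sub_mem hv (hULU hu')
    obtain ⟨a, ha, w, hw, huw⟩ := hZdecompS u' (hULZ u' hu')
    refine ⟨t + w, add_mem ht hw, a + s', (hMmem _).mpr ⟨a, ha, s', ⟨hsU, hs'⟩, rfl⟩, ?_⟩
    rw [hvs, huw]; abel
  -- M is maximal
  have hMtop : M ≠ ⊤ := by
    intro h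
    push_neg at hULnotS
    obtain ⟨u0, hu0UL, hu0S⟩ := hULnotS
    have : u0 ∈ M := h ▸ trivial
    exact hu0S (hSLS (hDSL u0 (hMUL u0 this hu0UL)))
  have hMmax : IsMaximalSubalgebra K L M := by
    refine ⟨hMtop, ?_⟩
    intro N hMN
    have hMleN : ∀ x ∈ M, x ∈ N := fun x hx => hMN.le hx
    obtain ⟨n0, hn0N, hn0M⟩ := SetLike.exists_of_lt hMN
    have hclosE : ∀ x y : L, y ∈ UL → y ∈ N → ⁅x, y⁆ ∈ UL ∧ ⁅x, y⁆ ∈ N := by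
      intro x y hyUL hyN
      obtain ⟨u, hu, m, hm, rfl⟩ := hULM x
      rw [add_lie]
      have h1 : ⁅u, y⁆ ∈ D := hZZ u (hULZ u hu) y (hULZ y hyUL)
      constructor
      · exact add_mem (hDUL _ h1) (UL.lie_mem hyUL)
      · exact add_mem (hMleN _ (hDM _ h1)) (N.lie_mem' (hMleN m hm) hyN)
    set E : LieIdeal K L := interIdeal UL ((N : LieSubalgebra K L)) hclosE with hEdef
    -- n0 gives an element of E not in D
    obtain ⟨u, hu, m, hm, hn0⟩ := hULM n0
    have huN : u ∈ N := by
      have he : u = n0 - m := by rw [hn0]; abel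
      rw [he]
      exact sub_mem hn0N (hMleN m hm)
    have huD : u ∉ D := by
      intro h
      exact hn0M (hn0 ▸ add_mem (hDM u h) hm)
    have hDE : D < E := by
      refine lt_of_le_of_ne (fun y hy => ⟨hDUL y hy, hMleN y (hDM y hy)⟩) ?_
      intro h
      exact huD (h ▸ (⟨hu, huN⟩ : u ∈ E))
    have hEUL : E ≤ UL := fun y hy => hy.1
    have hEeq : E = UL := hULchief.2 E hDE hEUL
    rw [eq_top_iff]
    intro x _
    obtain ⟨u', hu', m', hm', rfl⟩ := hULM x
    exact add_mem ((hEeq ▸ hu' : u' ∈ E)).2 (hMleN m' hm')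
  -- the core of M is A + D
  have hcore : IsCoreOf K L (A ⊔ D) M := by
    constructor
    · intro x hx
      have hx' : x ∈ A ⊔ D := hx
      rw [LieSubmodule.mem_sup] at hx'
      obtain ⟨a, ha, d, hd, rfl⟩ := hx'
      exact add_mem (hAM a ha) (hDM d hd)
    · intro J hJM
      intro j hjJ
      -- J centralizes UL/D
      have hJZ2 : ∀ x ∈ J, ∀ u ∈ UL, ⁅x, u⁆ ∈ D := by
        intro x hx u hu
        refine hMUL _ (hJM ?_) (UL.lie_mem hu)
        exact lieMemRight J u hx
      -- the ideal Y = cent UL D ∩ S is contained in SL, hence cent UL D ∩ J ≤ Z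
      have hDZ2 : ∀ x ∈ D, x ∈ cent UL D := fun x hx u hu =>
        hZZ x (hULZ x (hDUL x hx)) u (hULZ u hu)
      have hULZ2 : ∀ x ∈ UL, x ∈ cent UL D := fun x hx u hu =>
        hZZ x (hULZ x hx) u (hULZ u hu)
      have hclosY : ∀ x y : L, y ∈ cent UL D → y ∈ S → ⁅x, y⁆ ∈ cent UL D ∧ ⁅x, y⁆ ∈ S := by
        intro x y hyZ2 hyS
        obtain ⟨u, hu, s, hs, rfl⟩ := hULS x
        rw [add_lie]
        have h1 : ⁅u, y⁆ ∈ D := by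
          rw [← lie_skew]
          exact neg_mem (hyZ2 u hu)
        constructor
        · exact add_mem (hDZ2 _ h1) ((cent UL D).lie_mem hyZ2)
        · exact add_mem (hSLS (hDSL _ h1)) (S.lie_mem' hs hyS)
      have hYSL : ∀ x, x ∈ cent UL D → x ∈ S → x ∈ SL := fun x h1 h2 =>
        hSLmax (interIdeal (cent UL D) S hclosY) (fun y hy => hy.2) ⟨h1, h2⟩
      -- j ∈ Z2, hence j ∈ Z
      have hjZ2 : j ∈ cent UL D := fun u hu => hJZ2 j hjJ u hu
      have hjZ : j ∈ Z := by
        obtain ⟨u, hu, s, hs, rfl⟩ := hULS j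
        have hsZ2 : s ∈ cent UL D := by
          have he : s = (u + s) - u := by abel
          rw [he]
          exact sub_mem hjZ2 (hULZ2 u hu)
        exact add_mem (hULZ u hu) (hSLZ s (hYSL s hsZ2 hs))
      obtain ⟨a, ha, d, hd, hjad⟩ := hMZ j (hJM hjJ) hjZ
      rw [LieSubmodule.mem_sup]
      exact ⟨a, ha, d, hd, hjad.symm⟩
  -- assemble everything
  refine ⟨hMmax, hcore, hULchief, ⟨hULM, ?_⟩, hSLchief, ⟨hSLM, ?_⟩, ?_, ?_⟩
  · ext x
    constructor
    · rintro ⟨h1, h2⟩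
      exact hMUL x h2 h1
    · intro hx
      exact ⟨hDUL x hx, hDM x hx⟩
  · ext x
    constructor
    · rintro ⟨h1, h2⟩
      exact hMSL x h2 h1
    · intro hx
      exact ⟨hDSL x hx, hDM x hx⟩
  · ext x
    constructor
    · rintro ⟨h1, h2⟩
      exact hMU x h1 h2
    · rintro ⟨h1, h2⟩
      exact ⟨hUSM x h1 h2, h1⟩
  · ext x
    constructor
    · rintro ⟨h1, h2⟩
      exact hMS x h1 h2
    · rintro ⟨h1, h2⟩
      exact ⟨hUSM x h1 h2, h2⟩
end

section
/- Let L be a finite-dimensional Lie algebra, B an ideal of L, and U a subalgebra with L = B + U. If M is a maximal subalgebra of L supplementing a chief factor B_i/B_{i+1} of L with B ⊆ B_{i+1} ⊆ B_i, then M ∩ U is a maximal subalgebra of U supplementing the chief factor (B_i ∩ U)/(B_{i+1} ∩ U) of U, and the core of M ∩ U in U equals M_L ∩ U. -/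
namespace Stmt6Aux

variable {K : Type*} {L : Type*} [Field K] [LieRing L] [LieAlgebra K L]

/-- The sum `B + S` of an ideal `B` of `L` and a subalgebra `S` of a subalgebra `U`,
as a subalgebra of `L`. -/
def sumSub (B : LieIdeal K L) (U : LieSubalgebra K L) (S : LieSubalgebra K ↥U) :
    LieSubalgebra K L where
  carrier := {x | ∃ b ∈ B, ∃ s : ↥U, s ∈ S ∧ x = b + s}
  zero_mem' := ⟨0, B.zero_mem, 0, S.zero_mem, by simp⟩
  add_mem' := by
    rintro x y ⟨b, hb, s, hs, rfl⟩ ⟨b', hb', s', hs', rfl⟩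
    exact ⟨b + b', B.add_mem hb hb', s + s', S.add_mem hs hs', by push_cast; abel⟩
  smul_mem' := by
    rintro c x ⟨b, hb, s, hs, rfl⟩
    exact ⟨c • b, B.smul_mem c hb, c • s, S.smul_mem c hs, by rw [smul_add]; rfl⟩
  lie_mem' := by
    rintro x y ⟨b, hb, s, hs, rfl⟩ ⟨b', hb', s', hs', rfl⟩
    refine ⟨⁅b, b' + (s' : L)⁆ + ⁅(s : L), b'⁆, ?_, ⁅s, s'⁆, S.lie_mem hs hs', ?_⟩
    · refine B.add_mem ?_ (B.lie_mem hb')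
      rw [← lie_skew]
      exact neg_mem (B.lie_mem hb)
    · have : (↑⁅s, s'⁆ : L) = ⁅(s : L), (s' : L)⁆ := rfl
      rw [this]
      simp only [add_lie, lie_add]
      abel

@[simp]
theorem mem_sumSub {B : LieIdeal K L} {U : LieSubalgebra K L} {S : LieSubalgebra K ↥U} {x : L} :
    x ∈ sumSub B U S ↔ ∃ b ∈ B, ∃ s : ↥U, s ∈ S ∧ x = b + s :=
  Iff.rfl

/-- The sum `B + C` of an ideal `B` of `L` and an ideal `C` of a subalgebra `U` with
`L = B + U`, as an ideal of `L`. -/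
def sumIdeal (B : LieIdeal K L) (U : LieSubalgebra K L) (hBU : SumIsTop K L B U)
    (C : LieIdeal K ↥U) : LieIdeal K L where
  carrier := {x | ∃ b ∈ B, ∃ s : ↥U, s ∈ C ∧ x = b + s}
  zero_mem' := ⟨0, B.zero_mem, 0, C.zero_mem, by simp⟩
  add_mem' := by
    rintro x y ⟨b, hb, s, hs, rfl⟩ ⟨b', hb', s', hs', rfl⟩
    exact ⟨b + b', B.add_mem hb hb', s + s', C.add_mem hs hs', by push_cast; abel⟩
  smul_mem' := by
    rintro c x ⟨b, hb, s, hs, rfl⟩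
    exact ⟨c • b, B.smul_mem c hb, c • s, C.smul_mem c hs, by rw [smul_add]; rfl⟩
  lie_mem := by
    rintro x y ⟨b, hb, s, hs, rfl⟩
    obtain ⟨b₀, hb₀, u₀, hu₀, rfl⟩ := hBU x
    refine ⟨⁅b₀ + u₀, b⁆ + ⁅b₀, (s : L)⁆, B.add_mem (B.lie_mem hb) ?_,
      ⁅(⟨u₀, hu₀⟩ : ↥U), s⁆, C.lie_mem hs, ?_⟩
    · rw [← lie_skew]; exact neg_mem (B.lie_mem hb₀)
    · have hcs : (↑⁅(⟨u₀, hu₀⟩ : ↥U), s⁆ : L) = ⁅u₀, (s : L)⁆ := rfl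
      rw [hcs]
      simp only [lie_add, add_lie]
      abel

@[simp]
theorem mem_sumIdeal {B : LieIdeal K L} {U : LieSubalgebra K L} {hBU : SumIsTop K L B U}
    {C : LieIdeal K ↥U} {x : L} :
    x ∈ sumIdeal B U hBU C ↔ ∃ b ∈ B, ∃ s : ↥U, s ∈ C ∧ x = b + s :=
  Iff.rfl

end Stmt6Aux

variable {K : Type*} {L : Type*} [Field K] [LieRing L] [LieAlgebra K L]
variable [FiniteDimensional K L]

theorem stmt6 (B : LieIdeal K L) (U : LieSubalgebra K L)
    (hBU : SumIsTop K L B U)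
    (Bi Bi1 : LieIdeal K L) (hB1 : B ≤ Bi1) (hB2 : Bi1 ≤ Bi)
    (hchief : IsChiefFactor K L Bi Bi1)
    (M : LieSubalgebra K L) (hM : IsMaximalSubalgebra K L M)
    (hMsupp : Supplements K L M Bi Bi1)
    (ML : LieIdeal K L) (hML : IsCoreOf K L ML M) :
    IsMaximalSubalgebra K (↥U) (LieSubalgebra.comap U.incl M) ∧
    IsChiefFactor K (↥U) (LieIdeal.comap U.incl Bi) (LieIdeal.comap U.incl Bi1) ∧
    Supplements K (↥U) (LieSubalgebra.comap U.incl M)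
      (LieIdeal.comap U.incl Bi) (LieIdeal.comap U.incl Bi1) ∧
    IsCoreOf K (↥U) (LieIdeal.comap U.incl ML) (LieSubalgebra.comap U.incl M) := by
  classical
  -- notation
  set MU := LieSubalgebra.comap U.incl M with hMUdef
  have hmemMU : ∀ u : ↥U, u ∈ MU ↔ (u : L) ∈ M := fun u => Iff.rfl
  have hmemBi : ∀ u : ↥U, u ∈ LieIdeal.comap U.incl Bi ↔ (u : L) ∈ Bi := by
    intro u; rw [LieIdeal.mem_comap]; rfl
  have hmemBi1 : ∀ u : ↥U, u ∈ LieIdeal.comap U.incl Bi1 ↔ (u : L) ∈ Bi1 := by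
    intro u; rw [LieIdeal.mem_comap]; rfl
  have hmemML : ∀ u : ↥U, u ∈ LieIdeal.comap U.incl ML ↔ (u : L) ∈ ML := by
    intro u; rw [LieIdeal.mem_comap]; rfl
  have hBi1M : (Bi1 : Set L) ⊆ M := hMsupp.2.2
  have hBM : (B : Set L) ⊆ M := fun x hx => hBi1M (hB1 hx)
  -- Part 3 : supplements
  have hsum : SumIsTop K (↥U) (LieIdeal.comap U.incl Bi) MU := by
    intro u
    obtain ⟨a, ha, m, hm, hx⟩ := hMsupp.1 (u : L)
    obtain ⟨b, hb, u', hu', hmu⟩ := hBU m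
    have hu'M : u' ∈ M := by
      have : u' = m - b := by rw [hmu]; abel
      rw [this]; exact M.sub_mem hm (hBM hb)
    have habU : a + b ∈ U := by
      have : a + b = (u : L) - u' := by rw [hx, hmu]; abel
      rw [this]; exact U.sub_mem u.2 hu'
    refine ⟨⟨a + b, habU⟩, ?_, ⟨u', hu'⟩, (hmemMU _).2 hu'M, ?_⟩
    · exact (hmemBi _).2 (Bi.add_mem ha (hB2 (hB1 hb)))
    · apply Subtype.ext
      show (u : L) = (a + b) + u'
      rw [hx, hmu]; abel
  have hle1 : LieIdeal.comap U.incl Bi1 ≤ LieIdeal.comap U.incl Bi := by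
    intro u hu
    exact (hmemBi _).2 (hB2 ((hmemBi1 _).1 hu))
  have hsubM : ((LieIdeal.comap U.incl Bi1 : LieIdeal K ↥U) : Set ↥U) ⊆ MU := by
    intro u hu
    exact (hmemMU _).2 (hBi1M ((hmemBi1 _).1 hu))
  have hsupp : Supplements K (↥U) MU (LieIdeal.comap U.incl Bi) (LieIdeal.comap U.incl Bi1) :=
    ⟨hsum, hle1, hsubM⟩
  -- Part 1 : maximality
  have hmax : IsMaximalSubalgebra K (↥U) MU := by
    constructor
    · intro htop
      apply hM.1
      rw [eq_top_iff]
      intro x _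
      obtain ⟨b, hb, u', hu', rfl⟩ := hBU x
      have : (⟨u', hu'⟩ : ↥U) ∈ MU := by rw [htop]; exact LieSubalgebra.mem_top _
      exact M.add_mem (hBM hb) ((hmemMU _).1 this)
    · intro N hN
      set T := Stmt6Aux.sumSub B U N with hTdef
      have hMT : M ≤ T := by
        intro x hx
        obtain ⟨b, hb, u', hu', rfl⟩ := hBU x
        have hu'M : u' ∈ M := by
          have : u' = (b + u') - b := by abel
          rw [this]; exact M.sub_mem hx (hBM hb)
        exact ⟨b, hb, ⟨u', hu'⟩, hN.le ((hmemMU _).2 hu'M), rfl⟩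
      obtain ⟨s, hsN, hsM⟩ := SetLike.exists_of_lt hN
      have hsT : (s : L) ∈ T := ⟨0, B.zero_mem, s, hsN, by rw [zero_add]⟩
      have hsnotM : (s : L) ∉ M := fun h => hsM ((hmemMU _).2 h)
      have hMT' : M < T := lt_of_le_of_ne hMT (fun h => hsnotM (h ▸ hsT))
      have hTtop : T = ⊤ := hM.2 T hMT'
      rw [eq_top_iff]
      intro u _
      have : (u : L) ∈ T := by rw [hTtop]; exact LieSubalgebra.mem_top _
      obtain ⟨b, hb, s', hs', heq⟩ := this
      have hbU : b ∈ U := by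
        have : b = (u : L) - (s' : L) := by rw [heq]; abel
        rw [this]; exact U.sub_mem u.2 s'.2
      have hbN : (⟨b, hbU⟩ : ↥U) ∈ N := hN.le ((hmemMU _).2 (hBM hb))
      have : u = (⟨b, hbU⟩ : ↥U) + s' := by apply Subtype.ext; exact heq
      rw [this]
      exact N.add_mem hbN hs'
  -- Part 2 : chief factor
  have hchiefU : IsChiefFactor K (↥U) (LieIdeal.comap U.incl Bi) (LieIdeal.comap U.incl Bi1) := by
    constructor
    · obtain ⟨a, haBi, haBi1⟩ := SetLike.exists_of_lt hchief.1
      obtain ⟨b, hb, u', hu', rfl⟩ := hBU a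
      have hu'Bi : u' ∈ Bi := by
        have : u' = (b + u') - b := by abel
        rw [this]
        exact Bi.sub_mem haBi (hB2 (hB1 hb))
      have hu'nBi1 : u' ∉ Bi1 := by
        intro h
        exact haBi1 (Bi1.add_mem (hB1 hb) h)
      refine lt_of_le_of_ne hle1 (fun h => hu'nBi1 ?_)
      have : (⟨u', hu'⟩ : ↥U) ∈ LieIdeal.comap U.incl Bi := (hmemBi _).2 hu'Bi
      rw [← h] at this
      exact (hmemBi1 _).1 this
    · intro C hC1 hC2
      set D := Stmt6Aux.sumIdeal B U hBU C with hDdef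
      have hBi1D : Bi1 ≤ D := by
        intro x hx
        obtain ⟨b, hb, u', hu', rfl⟩ := hBU x
        have hu'Bi1 : u' ∈ Bi1 := by
          have : u' = (b + u') - b := by abel
          rw [this]; exact Bi1.sub_mem hx (hB1 hb)
        exact ⟨b, hb, ⟨u', hu'⟩, hC1.le ((hmemBi1 _).2 hu'Bi1), rfl⟩
      obtain ⟨s, hsC, hsB1⟩ := SetLike.exists_of_lt hC1
      have hsD : (s : L) ∈ D := ⟨0, B.zero_mem, s, hsC, by rw [zero_add]⟩
      have hsnB1 : (s : L) ∉ Bi1 := fun h => hsB1 ((hmemBi1 _).2 h)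
      have hlt : Bi1 < D := lt_of_le_of_ne hBi1D (fun h => hsnB1 (h ▸ hsD))
      have hDBi : D ≤ Bi := by
        rintro x ⟨b, hb, s', hs', rfl⟩
        exact Bi.add_mem (hB2 (hB1 hb)) ((hmemBi _).1 (hC2 hs'))
      have hDeq : D = Bi := hchief.2 D hlt hDBi
      refine le_antisymm hC2 ?_
      intro u hu
      have : (u : L) ∈ D := by rw [hDeq]; exact (hmemBi _).1 hu
      obtain ⟨b, hb, s', hs', heq⟩ := this
      have husC : u - s' ∈ C := by
        have hcoe : ((u - s' : ↥U) : L) = b := by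
          push_cast; rw [heq]; abel
        have : u - s' ∈ LieIdeal.comap U.incl Bi1 := (hmemBi1 _).2 (by rw [hcoe]; exact hB1 hb)
        exact hC1.le this
      have : u = (u - s') + s' := by abel
      rw [this]
      exact C.add_mem husC hs'
  -- Part 4 : core
  refine ⟨hmax, hchiefU, hsupp, ?_, ?_⟩
  · intro u hu
    exact (hmemMU _).2 (hML.1 ((hmemML _).1 hu))
  · intro J hJ
    set D := Stmt6Aux.sumIdeal B U hBU J with hDdef
    have hDM : (D : Set L) ⊆ M := by
      rintro x ⟨b, hb, s, hs, rfl⟩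
      exact M.add_mem (hBM hb) ((hmemMU _).1 (hJ hs))
    have hDML : D ≤ ML := hML.2 D hDM
    intro j hj
    have : (j : L) ∈ D := ⟨0, B.zero_mem, j, hj, by rw [zero_add]⟩
    exact (hmemML _).2 (hDML this)
end

section
/- Let L be a finite-dimensional Lie algebra with ideals K ⊆ Y_0 ⊂ Y_1 ⊂ ... ⊂ Y_m = H forming part of a chief series of L, and let A/B be a chief factor of L with K ⊆ B ⊆ A ⊆ H. If B + Y_{j-1} ⊂ A + Y_{j-1} for some j, then B + Y_{k-1} ⊂ A + Y_{k-1} for all 1 ≤ k ≤ j, A ∩ Y_{j-1} = B ∩ Y_{j-1}, and for all 1 ≤ k ≤ j one has (A + Y_{j-1})/(B + Y_{j-1}) ↘ (A + Y_{k-1})/(B + Y_{k-1}) ↘ A/B. -/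
variable {K : Type*} {L : Type*} [Field K] [LieRing L] [LieAlgebra K L]
variable [FiniteDimensional K L]

lemma stmt8_modular (x y z : LieIdeal K L) (h : z ≤ x) : x ⊓ (y ⊔ z) = (x ⊓ y) ⊔ z :=
  (inf_sup_assoc_of_le y h).symm

set_option maxHeartbeats 1600000 in
theorem stmt8 (Kd H : LieIdeal K L) (m : ℕ) (Y : ℕ → LieIdeal K L)
    (hK0 : Kd ≤ Y 0) (hYm : Y m = H)
    (hchain : ∀ i < m, IsChiefFactor K L (Y (i + 1)) (Y i))
    (A B : LieIdeal K L) (hAB : IsChiefFactor K L A B)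
    (hKB : Kd ≤ B) (hAH : A ≤ H)
    (j : ℕ) (hj1 : 1 ≤ j) (hjm : j ≤ m)
    (h : B ⊔ Y (j - 1) < A ⊔ Y (j - 1)) :
    (∀ k, 1 ≤ k → k ≤ j → B ⊔ Y (k - 1) < A ⊔ Y (k - 1)) ∧
    A ⊓ Y (j - 1) = B ⊓ Y (j - 1) ∧
    (∀ k, 1 ≤ k → k ≤ j →
      Searrow K L (A ⊔ Y (j - 1)) (B ⊔ Y (j - 1)) (A ⊔ Y (k - 1)) (B ⊔ Y (k - 1)) ∧
      Searrow K L (A ⊔ Y (k - 1)) (B ⊔ Y (k - 1)) A B) := by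
  have hmono : ∀ a b, a ≤ b → b ≤ m → Y a ≤ Y b := by
    intro a b hab hbm
    induction b with
    | zero => simp [Nat.le_zero.mp hab]
    | succ n ih =>
      rcases Nat.lt_or_ge a (n+1) with hlt | hge
      · exact le_trans (ih (Nat.lt_succ_iff.mp hlt) (le_trans (Nat.le_succ n) hbm))
          (le_of_lt (hchain n (Nat.lt_of_succ_le hbm)).1)
      · have : a = n + 1 := le_antisymm hab hge
        simp [this]
  have hBA : B ≤ A := hAB.1.le
  have hkey : A ⊓ Y (j - 1) ≤ B := by
    by_contra hc
    have hBC : B < B ⊔ (A ⊓ Y (j - 1)) :=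
      lt_of_le_of_ne le_sup_left fun he => hc (le_sup_right.trans he.ge)
    have hCA : B ⊔ (A ⊓ Y (j - 1)) ≤ A := sup_le hBA inf_le_left
    have hCeq := hAB.2 _ hBC hCA
    have hA : A ≤ B ⊔ Y (j - 1) := by
      rw [← hCeq]; exact sup_le le_sup_left (inf_le_right.trans le_sup_right)
    exact absurd (sup_le hA le_sup_right) (not_le_of_gt h)
  have hjm' : j - 1 ≤ m := le_trans (Nat.sub_le j 1) hjm
  refine ⟨?_, ?_, ?_⟩
  · intro k hk1 hkj
    have hYk : Y (k - 1) ≤ Y (j - 1) := hmono _ _ (Nat.sub_le_sub_right hkj 1) hjm'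
    have hle : B ⊔ Y (k - 1) ≤ A ⊔ Y (k - 1) := sup_le (hBA.trans le_sup_left) le_sup_right
    refine lt_of_le_of_ne hle fun he => ?_
    have hA : A ≤ B ⊔ Y (k - 1) := he ▸ (le_sup_left : A ≤ A ⊔ Y (k - 1))
    have h1 : B ⊔ Y (k - 1) ≤ B ⊔ Y (j - 1) := sup_le le_sup_left (hYk.trans le_sup_right)
    have : A ⊔ Y (j - 1) ≤ B ⊔ Y (j - 1) := sup_le (hA.trans h1) le_sup_right
    exact absurd this (not_le_of_gt h)
  · exact le_antisymm (le_inf hkey inf_le_right) (inf_le_inf_right _ hBA)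
  · intro k hk1 hkj
    have hYk : Y (k - 1) ≤ Y (j - 1) := hmono _ _ (Nat.sub_le_sub_right hkj 1) hjm'
    have hAk : A ⊓ Y (k - 1) ≤ B := le_trans (inf_le_inf_left A hYk) hkey
    have hz : B ≤ A ⊔ Y (k - 1) := hBA.trans le_sup_left
    refine ⟨⟨?_, ?_⟩, ?_, ?_⟩
    · apply le_antisymm
      · exact sup_le (le_sup_left.trans le_sup_right) (le_sup_right.trans le_sup_left)
      · exact sup_le (sup_le (hBA.trans le_sup_left) le_sup_right)
          (sup_le le_sup_left (hYk.trans le_sup_right))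
    · apply le_antisymm
      · have hm1 : (B ⊔ Y (j - 1)) ⊓ (A ⊔ Y (k - 1)) ≤ B ⊔ (Y (j - 1) ⊓ (A ⊔ Y (k - 1))) :=
          IsModularLattice.sup_inf_le_assoc_of_le (Y (j - 1)) hz
        have hm2 : (Y (k - 1) ⊔ A) ⊓ Y (j - 1) ≤ Y (k - 1) ⊔ (A ⊓ Y (j - 1)) :=
          IsModularLattice.sup_inf_le_assoc_of_le A hYk
        have h4 : Y (j - 1) ⊓ (A ⊔ Y (k - 1)) ≤ (Y (k - 1) ⊔ A) ⊓ Y (j - 1) :=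
          le_inf (inf_le_right.trans (sup_le le_sup_right le_sup_left)) inf_le_left
        have h5 : Y (j - 1) ⊓ (A ⊔ Y (k - 1)) ≤ B ⊔ Y (k - 1) :=
          (h4.trans hm2).trans (sup_le le_sup_right (hkey.trans le_sup_left))
        exact hm1.trans (sup_le le_sup_left h5)
      · exact le_inf (sup_le le_sup_left (hYk.trans le_sup_right))
          (sup_le (hBA.trans le_sup_left) le_sup_right)
    · exact le_antisymm
        (sup_le le_sup_right (le_sup_right.trans le_sup_left))
        (sup_le (sup_le (hBA.trans le_sup_left) le_sup_right) le_sup_left)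
    · apply le_antisymm
      · have hm : (B ⊔ Y (k - 1)) ⊓ A ≤ B ⊔ (Y (k - 1) ⊓ A) :=
          IsModularLattice.sup_inf_le_assoc_of_le (Y (k - 1)) hBA
        have h6 : Y (k - 1) ⊓ A ≤ B := (le_inf inf_le_right inf_le_left).trans hAk
        exact hm.trans (sup_le le_rfl h6)
      · exact le_inf le_sup_left hBA
end

section
/- Let L be a finite-dimensional Lie algebra. If [A/B ↘ C/D] is an m-crossing of L with B/D also a chief factor of L, then [A/C ↘ B/D] is an m-crossing; moreover a maximal subalgebra M supplements C/D if and only if M supplements B/D. -/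
variable {K : Type*} {L : Type*} [Field K] [LieRing L] [LieAlgebra K L]
variable [FiniteDimensional K L]

/-!
For a maximal subalgebra `M`, supplementing `C/D` resp. `B/D` amounts to `D ⊆ M` together with
`C ⊄ M` resp. `B ⊄ M`, so everything follows once `B ⊆ M ↔ C ⊆ M` for every maximal `M`.
Since `A/B` is Frattini, `B ⊆ M` gives `A ⊆ M`, hence `C ⊆ M`. Consequently a fixed supplement
`M₀` of `C/D` does not contain `B`, and it meets `B` in `D`: `B ∩ M₀` is an ideal
(as `L = C + M₀` and `[C, B] ⊆ D ⊆ M₀`) strictly below `B`.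

The converse, that a maximal subalgebra `M ⊇ C` contains `B`, is where the work is. Otherwise
`L = B + M`, and `(B ∩ M) + (M ∩ M₀)` is a proper subalgebra of `M` (else the modular law would
give `M₀ ⊆ M`). Take `M₂` maximal in `M` above it. Then `B + M₂` is proper (else `M ⊆ M₂`), so it
lies in a maximal subalgebra `M₁`, which contains `B`, hence `C`. As `M ⊄ M₁`, we get
`M ∩ M₁ = M₂ ⊇ C`, and then `M = C + (M ∩ M₀) ⊆ M₂`, a contradiction.
-/

section LieSubalgebraSup

variable {R L : Type*} [CommRing R] [LieRing L] [LieAlgebra R L]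

theorem LieSubalgebra.toSubmodule_sup_of_le_normalizer {H S : LieSubalgebra R L}
    (h : S ≤ H.normalizer) : (H ⊔ S).toSubmodule = H.toSubmodule ⊔ S.toSubmodule := by
  let J : LieSubalgebra R L :=
    { toSubmodule := H.toSubmodule ⊔ S.toSubmodule
      lie_mem' := fun {x y} hx hy => by
        obtain ⟨a, ha, s, hs, rfl⟩ := Submodule.mem_sup.1 hx
        obtain ⟨b, hb, t, ht, rfl⟩ := Submodule.mem_sup.1 hy
        have hH : ⁅a, b⁆ + ⁅a, t⁆ + ⁅s, b⁆ ∈ H :=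
          H.add_mem (H.add_mem (H.lie_mem ha hb) ((H.mem_normalizer_iff' t).1 (h ht) a ha))
            (LieSubalgebra.ideal_in_normalizer (h hs) hb)
        have hexpand : ⁅a + s, b + t⁆ = (⁅a, b⁆ + ⁅a, t⁆ + ⁅s, b⁆) + ⁅s, t⁆ := by
          simp only [add_lie, lie_add]
          abel
        rw [hexpand]
        exact Submodule.add_mem_sup hH (S.lie_mem hs ht) }
  have hJ : H ⊔ S ≤ J :=
    sup_le (fun _ hx => Submodule.mem_sup_left hx) (fun _ hx => Submodule.mem_sup_right hx)
  exact le_antisymm hJ <| sup_le ((LieSubalgebra.toSubmodule_le_toSubmodule _ _).2 le_sup_left)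
    ((LieSubalgebra.toSubmodule_le_toSubmodule _ _).2 le_sup_right)

theorem LieIdeal.toSubmodule_toLieSubalgebra_sup (I : LieIdeal R L) (S : LieSubalgebra R L) :
    ((I : LieSubalgebra R L) ⊔ S).toSubmodule =
      (I : LieSubalgebra R L).toSubmodule ⊔ S.toSubmodule :=
  LieSubalgebra.toSubmodule_sup_of_le_normalizer fun x _ =>
    (LieSubalgebra.mem_normalizer_iff _ x).2 fun _ hy => I.lie_mem hy

/-- The modular law `T = (X + Y) ∩ T = X + (Y ∩ T)` for `X ≤ T`, read in the submodule lattice. -/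
theorem LieSubalgebra.le_of_toSubmodule_sup_eq_top {X Y T U : LieSubalgebra R L}
    (h : X.toSubmodule ⊔ Y.toSubmodule = ⊤) (hXT : X ≤ T) (hXU : X ≤ U) (hYT : Y ⊓ T ≤ U) :
    T ≤ U := by
  rw [← LieSubalgebra.toSubmodule_le_toSubmodule] at hXT hXU hYT ⊢
  calc T.toSubmodule = (X.toSubmodule ⊔ Y.toSubmodule) ⊓ T.toSubmodule := by rw [h, top_inf_eq]
    _ = X.toSubmodule ⊔ (Y ⊓ T).toSubmodule := by
      rw [sup_inf_assoc_of_le _ hXT, LieSubalgebra.inf_toSubmodule]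
    _ ≤ U.toSubmodule := sup_le hXU hYT

end LieSubalgebraSup

section SumIsTop

variable {K L : Type*} [Field K] [LieRing L] [LieAlgebra K L] {I : LieIdeal K L}
  {M : LieSubalgebra K L}

theorem sumIsTop_iff_toSubmodule :
    SumIsTop K L I M ↔ (I : LieSubalgebra K L).toSubmodule ⊔ M.toSubmodule = ⊤ := by
  simp only [SumIsTop, Submodule.eq_top_iff', Submodule.mem_sup, eq_comm]
  rfl

theorem sumIsTop_iff : SumIsTop K L I M ↔ (I : LieSubalgebra K L) ⊔ M = ⊤ := by
  rw [sumIsTop_iff_toSubmodule, ← LieIdeal.toSubmodule_toLieSubalgebra_sup,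
    LieSubalgebra.toSubmodule_eq_top]

theorem IsMaximalSubalgebra.sumIsTop_iff (hM : IsMaximalSubalgebra K L M) :
    SumIsTop K L I M ↔ ¬ (I : Set L) ⊆ M := by
  rw [_root_.sumIsTop_iff, ← codisjoint_iff, codisjoint_comm]
  exact (IsCoatom.not_le_iff_codisjoint hM).symm

theorem IsChiefFactor.inf_le_of_not_subset {B C D : LieIdeal K L}
    (hBD : IsChiefFactor K L B D) (hCB : ⁅C, B⁆ ≤ D) (hCM : SumIsTop K L C M)
    (hDM : (D : Set L) ⊆ M) (hBM : ¬ (B : Set L) ⊆ M) :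
    (B : LieSubalgebra K L) ⊓ M ≤ D := by
  let J : LieIdeal K L :=
    { toSubmodule := (B : Submodule K L) ⊓ M.toSubmodule
      lie_mem := fun {y x} hx => by
        obtain ⟨c, hc, m, hm, rfl⟩ := hCM y
        have hcx : ⁅c, x⁆ ∈ D := hCB (LieSubmodule.lie_mem_lie hc hx.1)
        rw [add_lie]
        exact ⟨B.add_mem (hBD.1.le hcx) (B.lie_mem hx.1), M.add_mem (hDM hcx) (M.lie_mem hm hx.2)⟩ }
  have hDJ : D ≤ J := fun x hx => ⟨hBD.1.le hx, hDM hx⟩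
  rcases hDJ.eq_or_lt with hDJ | hDJ
  · exact fun x hx => hDJ ▸ hx
  · have hJB : J = B := hBD.2 J hDJ fun x hx => hx.1
    exact absurd (fun x hx => (hJB.symm ▸ hx : x ∈ J).2) hBM

end SumIsTop

theorem subset_of_frattini_of_supplement {B C : LieIdeal K L} {M₀ M : LieSubalgebra K L}
    (hfrat : ∀ N : LieSubalgebra K L, IsMaximalSubalgebra K L N → (B : Set L) ⊆ N →
      (C : Set L) ⊆ N)
    (hCM₀ : SumIsTop K L C M₀) (hBM₀ : (B : LieSubalgebra K L) ⊓ M₀ ≤ M)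
    (hM : IsMaximalSubalgebra K L M) (hCM : (C : Set L) ⊆ M) : (B : Set L) ⊆ M := by
  change (B : LieSubalgebra K L) ≤ M
  by_contra hBM
  have hBMtop : SumIsTop K L B M := hM.sumIsTop_iff.2 hBM
  have hP : (B : LieSubalgebra K L) ⊓ M ⊔ M ⊓ M₀ < M := by
    refine (sup_le inf_le_right inf_le_left).lt_of_ne fun hPM => hM.1 (top_unique ?_)
    have hB_MM₀ : SumIsTop K L B (M ⊓ M₀) := by
      rw [sumIsTop_iff, ← sup_inf_self (a := (B : LieSubalgebra K L)) (b := M), sup_assoc, hPM,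
        ← sumIsTop_iff]
      exact hBMtop
    have hM₀M : M₀ ≤ M := LieSubalgebra.le_of_toSubmodule_sup_eq_top
      (by rw [sup_comm]; exact sumIsTop_iff_toSubmodule.1 hB_MM₀) inf_le_right inf_le_left hBM₀
    exact (sumIsTop_iff.1 hCM₀).ge.trans (sup_le hCM hM₀M)
  obtain ⟨M₂, hPM₂, hM₂M⟩ := exists_le_covBy_of_lt hP
  have hBM₂ : ¬ SumIsTop K L B M₂ := fun h => hM₂M.lt.not_ge <|
    LieSubalgebra.le_of_toSubmodule_sup_eq_top
      (by rw [sup_comm]; exact sumIsTop_iff_toSubmodule.1 h) hM₂M.le le_rfl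
      (le_sup_left.trans hPM₂)
  obtain ⟨M₁, hBM₂M₁, hM₁⟩ := exists_le_covBy_of_lt (lt_top_iff_ne_top.2 (mt sumIsTop_iff.2 hBM₂))
  have hM₁ : IsMaximalSubalgebra K L M₁ := covBy_top_iff.1 hM₁
  have hBM₁ : (B : LieSubalgebra K L) ≤ M₁ := le_sup_left.trans hBM₂M₁
  have hMM₁ : M ⊓ M₁ = M₂ := by
    refine (hM₂M.eq_or_eq (le_inf hM₂M.le (le_sup_right.trans hBM₂M₁)) inf_le_left).resolve_right
      fun h => hM₁.1 (top_unique ?_)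
    exact (sumIsTop_iff.1 hBMtop).ge.trans (sup_le hBM₁ (inf_eq_left.1 h))
  have hCM₂ : (C : LieSubalgebra K L) ≤ M₂ := hMM₁ ▸ le_inf hCM (hfrat M₁ hM₁ hBM₁)
  exact hM₂M.lt.not_ge <| LieSubalgebra.le_of_toSubmodule_sup_eq_top
    (sumIsTop_iff_toSubmodule.1 hCM₀) hCM hCM₂ (inf_comm M₀ M ▸ le_sup_right.trans hPM₂)

theorem stmt9 (A B C D : LieIdeal K L)
    (hcross : MCrossing K L A B C D)
    (hAC : IsChiefFactor K L A C) (hBD : IsChiefFactor K L B D) :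
    MCrossing K L A C B D ∧
    ∀ M : LieSubalgebra K L, IsMaximalSubalgebra K L M →
      (Supplements K L M C D ↔ Supplements K L M B D) := by
  obtain ⟨-, -, ⟨rfl, rfl⟩, ⟨-, hfrat⟩, M₀, hM₀, hCM₀, -, hDM₀⟩ := hcross
  have hfratC : ∀ M, IsMaximalSubalgebra K L M → (B : Set L) ⊆ M → (C : Set L) ⊆ M :=
    fun M hM hB x hx => hfrat M hM hB ((le_sup_right : C ≤ B ⊔ C) hx)
  have hBM₀ : ¬ (B : Set L) ⊆ M₀ := fun h => hM₀.sumIsTop_iff.1 hCM₀ (hfratC M₀ hM₀ h)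
  have hBM₀D : (B : LieSubalgebra K L) ⊓ M₀ ≤ (B ⊓ C : LieIdeal K L) :=
    hBD.inf_le_of_not_subset (inf_comm C B ▸ LieSubmodule.lie_le_inf C B) hCM₀ hDM₀ hBM₀
  have hBC : ∀ M, IsMaximalSubalgebra K L M → ((B : Set L) ⊆ M ↔ (C : Set L) ⊆ M) :=
    fun M hM => ⟨hfratC M hM, fun hCM => subset_of_frattini_of_supplement hfratC hCM₀
      (fun x hx => hCM ((inf_le_right : B ⊓ C ≤ C) (hBM₀D hx))) hM hCM⟩
  have hsupp : ∀ M, IsMaximalSubalgebra K L M →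
      (Supplements K L M C (B ⊓ C) ↔ Supplements K L M B (B ⊓ C)) := fun M hM => by
    simp only [Supplements, hM.sumIsTop_iff, hBC M hM, inf_le_left, inf_le_right, true_and]
  exact ⟨⟨hAC, hBD, ⟨sup_comm B C, inf_comm C B⟩,
    ⟨hAC, fun M hM hCM => hfrat M hM ((hBC M hM).2 hCM)⟩,
    M₀, hM₀, (hsupp M₀ hM₀).1 ⟨hCM₀, inf_le_right, hDM₀⟩⟩, hsupp⟩
end

section
/- Let L be a finite-dimensional Lie algebra and let [A/B ↘ C/D] be an m-crossing of L. Then C/D is an abelian chief factor of L. -/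
/-!
Suppose `C/D` is not abelian and let `Z ⊇ D` be its centralizer; `B ⊆ Z` since
`⁅B, C⁆ ⊆ B ∩ C = D`. For `x ∈ C ⊆ A` the Engel subalgebra of `x` modulo `Z` is all of `L`:
otherwise it lies in a maximal subalgebra `M ⊇ Z ⊇ B`, which contains `A` because `A/B` is
Frattini, and then the Fitting decomposition `L/Z = ker (ad x)ⁿ ⊕ range (ad x)ⁿ` puts all of `L`
into `M`. By Engel's theorem `C` acts nilpotently on `L/Z`. But non-abelian chiefness gives
`C = ⁅C, C⁆ + D`, hence `C ⊆ ⁅C, ⁅C, …⁆⁆ + D ⊆ Z`, i.e. `C/D` is abelian after all.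
-/

open LieAlgebra LieModule

section EngelModulo

variable {K L : Type*} [Field K] [LieRing L] [LieAlgebra K L]

theorem LieSubmodule.Quotient.toEnd_pow_mk {M : Type*} [AddCommGroup M] [Module K M]
    [LieRingModule L M] [LieModule K L M] (N : LieSubmodule K L M) (x : L) (m : M) (n : ℕ) :
    (toEnd K L (M ⧸ N) x ^ n) (LieSubmodule.Quotient.mk m) =
      LieSubmodule.Quotient.mk ((toEnd K L M x ^ n) m) :=
  LinearMap.congr_fun (Module.End.commute_pow_left_of_commute
    (LieSubmodule.Quotient.toEnd_comp_mk' N x) n) m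

theorem LieIdeal.ad_pow_mem (I : LieIdeal K L) (x : L) {y : L} (hy : y ∈ I) (n : ℕ) :
    (ad K L x ^ n) y ∈ I := by
  induction n with
  | zero => simpa using hy
  | succ n ih => rw [pow_succ', Module.End.mul_apply]; exact I.lie_mem ih

theorem LieIdeal.ad_pow_mem_of_le (I : LieIdeal K L) (x : L) {y : L} {m n : ℕ} (hmn : m ≤ n)
    (hy : (ad K L x ^ m) y ∈ I) : (ad K L x ^ n) y ∈ I := by
  obtain ⟨k, rfl⟩ := Nat.exists_eq_add_of_le hmn
  rw [add_comm, pow_add, Module.End.mul_apply]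
  exact I.ad_pow_mem x hy k

def LieIdeal.engel (Z : LieIdeal K L) (x : L) : LieSubalgebra K L where
  carrier := {y | ∃ n, (ad K L x ^ n) y ∈ Z}
  add_mem' := by
    rintro y z ⟨m, hm⟩ ⟨n, hn⟩
    refine ⟨m + n, ?_⟩
    rw [map_add]
    exact add_mem (Z.ad_pow_mem_of_le x (by omega) hm) (Z.ad_pow_mem_of_le x (by omega) hn)
  zero_mem' := ⟨0, by simp⟩
  smul_mem' := by
    rintro t y ⟨n, hn⟩
    exact ⟨n, by rw [map_smul]; exact Z.smul_mem t hn⟩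
  lie_mem' := by
    rintro y z ⟨m, hm⟩ ⟨n, hn⟩
    refine ⟨m + n, ?_⟩
    rw [ad_pow_lie]
    refine sum_mem fun ij hij => nsmul_mem ?_ _
    obtain (h | h) : m ≤ ij.1 ∨ n ≤ ij.2 := by
      rw [Finset.HasAntidiagonal.mem_antidiagonal] at hij; omega
    · exact lie_mem_left K L Z _ _ (Z.ad_pow_mem_of_le x h hm)
    · exact lie_mem_right K L Z _ _ (Z.ad_pow_mem_of_le x h hn)

theorem LieIdeal.mem_engel_iff (Z : LieIdeal K L) (x y : L) :
    y ∈ Z.engel x ↔ ∃ n, (toEnd K L (L ⧸ Z) x ^ n) (LieSubmodule.Quotient.mk y) = 0 := by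
  simp only [LieSubmodule.Quotient.toEnd_pow_mk, LieSubmodule.Quotient.mk_eq_zero']
  rfl

end EngelModulo

section Frattini

variable {K L : Type*} [Field K] [LieRing L] [LieAlgebra K L] [FiniteDimensional K L]

theorem isNilpotent_toEnd_quotient_of_le_maximal {Z I : LieIdeal K L}
    (hI : ∀ M, IsMaximalSubalgebra K L M → (Z : Set L) ⊆ M → (I : Set L) ⊆ M)
    {x : L} (hx : x ∈ I) : IsNilpotent (toEnd K L (L ⧸ Z) x) := by
  set φ := toEnd K L (L ⧸ Z) x
  obtain ⟨n, ⟨hcod, hker⟩, hn⟩ := ((φ.eventually_codisjoint_ker_pow_range_pow.and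
    φ.eventually_iSup_ker_pow_eq).and (Filter.eventually_ge_atTop 1)).exists
  have hE : Z.engel x = ⊤ := by
    by_contra hE
    obtain ⟨M, hM, hEM⟩ := (eq_top_or_exists_le_coatom (Z.engel x)).resolve_left hE
    have hIM : (I : Set L) ⊆ M := hI M hM fun z hz => hEM ⟨0, by simpa using hz⟩
    refine hM.1 (eq_top_iff.2 fun w _ => ?_)
    obtain ⟨u, hu, _, ⟨t', rfl⟩, huv⟩ :=
      Submodule.mem_sup.mp (hcod.eq_top ▸ Submodule.mem_top (x := LieSubmodule.Quotient.mk w))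
    obtain ⟨t, rfl⟩ := LieSubmodule.Quotient.surjective_mk' Z t'
    have hw : w - (ad K L x ^ n) t ∈ Z.engel x := by
      refine (Z.mem_engel_iff x _).2 ⟨n, ?_⟩
      have hmk : LieSubmodule.Quotient.mk (N := Z) (w - (ad K L x ^ n) t) = u := by
        rw [eq_sub_of_add_eq huv, LieSubmodule.Quotient.mk'_apply,
          LieSubmodule.Quotient.toEnd_pow_mk]
        rfl
      rw [hmk]
      exact hu
    have ht : (ad K L x ^ n) t ∈ I := by
      obtain ⟨k, rfl⟩ := Nat.exists_eq_add_of_le' hn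
      rw [pow_succ, Module.End.mul_apply]
      exact I.ad_pow_mem x (lie_mem_left K L I x t hx) k
    simpa using M.add_mem (hEM hw) (hIM ht)
  refine ⟨n, LinearMap.ker_eq_top.mp (eq_top_iff.2 fun m _ => ?_)⟩
  obtain ⟨y, rfl⟩ := LieSubmodule.Quotient.surjective_mk' Z m
  obtain ⟨k, hk⟩ := (Z.mem_engel_iff x y).1 (hE ▸ LieSubalgebra.mem_top y)
  exact hker ▸ Submodule.mem_iSup_of_mem k hk

end Frattini

section Nilpotent

variable {K L : Type*} [Field K] [LieRing L] [LieAlgebra K L]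
variable {M : Type*} [AddCommGroup M] [Module K M] [LieRingModule L M]

theorem LieIdeal.map_lcs_of_surjective [LieModule K L M] {M₂ : Type*} [AddCommGroup M₂]
    [Module K M₂] [LieRingModule L M₂] [LieModule K L M₂] {f : M →ₗ⁅K,L⁆ M₂}
    (hf : Function.Surjective f) (I : LieIdeal K L) (k : ℕ) : (I.lcs M k).map f = I.lcs M₂ k := by
  induction k with
  | zero => rw [lcs_zero, lcs_zero, LieModuleHom.map_top, (LieModuleHom.range_eq_top f).2 hf]
  | succ k ih => rw [lcs_succ, lcs_succ, LieSubmodule.map_bracket_eq, ih]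

theorem LieIdeal.le_lcs_sup {I : LieIdeal K L} {N D : LieSubmodule K L M} (hN : N ≤ ⁅I, N⁆ ⊔ D)
    (k : ℕ) : N ≤ I.lcs M k ⊔ D := by
  induction k with
  | zero => exact le_sup_of_le_left le_top
  | succ k ih =>
    calc N ≤ ⁅I, N⁆ ⊔ D := hN
      _ ≤ ⁅I, I.lcs M k ⊔ D⁆ ⊔ D := sup_le_sup_right (LieSubmodule.mono_lie_right I ih) D
      _ ≤ I.lcs M (k + 1) ⊔ D := by
        rw [LieSubmodule.lie_sup, lcs_succ, sup_assoc]
        exact sup_le_sup_left (sup_le (LieSubmodule.lie_le_right D I) le_rfl) _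

theorem LieSubmodule.le_of_isNilpotent_quotient [LieModule K L M] {I : LieIdeal K L}
    {N D Z : LieSubmodule K L M} (hN : N ≤ ⁅I, N⁆ ⊔ D) (hDZ : D ≤ Z)
    [LieModule.IsNilpotent I (M ⧸ Z)] : N ≤ Z := by
  obtain ⟨k, hk⟩ := LieModule.IsNilpotent.nilpotent K I (M ⧸ Z)
  have hlcs : I.lcs (M ⧸ Z) k = ⊥ :=
    LieSubmodule.toSubmodule_injective (by rw [I.coe_lcs_eq, hk]; rfl)
  have hmap := I.map_lcs_of_surjective (LieSubmodule.Quotient.surjective_mk' Z) k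
  calc N ≤ I.lcs M k ⊔ D := I.le_lcs_sup hN k
    _ ≤ Z := sup_le ((LieSubmodule.Quotient.map_mk'_eq_bot_le _ _).1 (hmap.trans hlcs)) hDZ

end Nilpotent

section ChiefFactor

variable {K L : Type*} [Field K] [LieRing L] [LieAlgebra K L]

def LieIdeal.factorCentralizer (C D : LieIdeal K L) : LieIdeal K L where
  carrier := {w | ∀ c ∈ C, ⁅w, c⁆ ∈ D}
  add_mem' ha hb c hc := by rw [add_lie]; exact D.add_mem (ha c hc) (hb c hc)
  zero_mem' c _ := by rw [zero_lie]; exact D.zero_mem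
  smul_mem' t w hw c hc := by rw [smul_lie]; exact D.smul_mem t (hw c hc)
  lie_mem {w z} hz c hc := by
    rw [lie_lie]
    exact D.sub_mem (D.lie_mem (hz c hc)) (hz _ (C.lie_mem hc))

theorem LieIdeal.le_factorCentralizer_iff {C D J : LieIdeal K L} :
    J ≤ C.factorCentralizer D ↔ ⁅J, C⁆ ≤ D :=
  (LieSubmodule.lie_le_iff _ _ _).symm

theorem factorAbelian_iff_lie_le {C D : LieIdeal K L} : FactorAbelian K L C D ↔ ⁅C, C⁆ ≤ D :=
  (LieSubmodule.lie_le_iff _ _ _).symm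

theorem IsChiefFactor.le_lie_sup {C D : LieIdeal K L} (h : IsChiefFactor K L C D)
    (hC : ¬ FactorAbelian K L C D) : C ≤ ⁅C, C⁆ ⊔ D :=
  (h.2 _ (right_lt_sup.2 (mt factorAbelian_iff_lie_le.2 hC))
    (sup_le (LieSubmodule.lie_le_left C C) h.1.le)).ge

end ChiefFactor

variable {K : Type*} {L : Type*} [Field K] [LieRing L] [LieAlgebra K L]
variable [FiniteDimensional K L]

theorem stmt10 (A B C D : LieIdeal K L)
    (hcross : MCrossing K L A B C D) :
    FactorAbelian K L C D := by
  obtain ⟨-, hCD, ⟨rfl, hBC⟩, hFr, -⟩ := hcross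
  by_contra hC
  set Z := C.factorCentralizer D
  have hBZ : B ≤ Z := LieIdeal.le_factorCentralizer_iff.2 (hBC ▸ LieSubmodule.lie_le_inf B C)
  have hDZ : D ≤ Z := LieIdeal.le_factorCentralizer_iff.2 (LieSubmodule.lie_le_left D C)
  have : LieModule.IsNilpotent C (L ⧸ Z) := (isNilpotent_iff_forall' (R := K)).2 fun x =>
    isNilpotent_toEnd_quotient_of_le_maximal (fun M hM hZM => hFr.2 M hM fun b hb => hZM (hBZ hb))
      (le_sup_right (a := B) x.2)
  exact hC (factorAbelian_iff_lie_le.2 (LieIdeal.le_factorCentralizer_iff.1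
    (LieSubmodule.le_of_isNilpotent_quotient (hCD.le_lie_sup hC) hDZ)))
end

section
/- Let L be a finite-dimensional Lie algebra and suppose the chief factors A/B and C/D of L are m-related. Then A/B is Frattini if and only if C/D is Frattini. -/
variable {K : Type*} {L : Type*} [Field K] [LieRing L] [LieAlgebra K L]
variable [FiniteDimensional K L]

/-!
The m-relations are built from the relation `A/B ↘ C/D`, and the property "`A` lies in every
maximal subalgebra containing `B`" passes from `C/D` up to `A/B`. This settles every case
except the right-hand side of (4), where one needs that `U/W` is Frattini for an m-crossing
`[U/V ↘ W/X]`. If a maximal subalgebra `M ⊇ W` missed `V`, let `N` be a maximal subalgebra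
supplementing `W/X`. As `V/X` is a chief factor, `V ∩ N = X`; a maximal subalgebra containing
`V + (M ∩ N)` would contain `V`, hence `U`, and hence `M`, so `V + (M ∩ N) = L`. Then
`N ⊆ X + M = M`, so `N = M ⊇ W`, which is absurd.
-/

section MRelated

variable {K : Type*} {L : Type*} [Field K] [LieRing L] [LieAlgebra K L]

lemma isChiefFactor_iff_covBy {A B : LieIdeal K L} : IsChiefFactor K L A B ↔ B ⋖ A :=
  and_congr_right fun _ =>
    ⟨fun h C hBC hCA => hCA.ne (h C hBC hCA.le),
      fun h _ hBC hCA => hCA.eq_of_not_lt (h hBC)⟩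

lemma Searrow.symm {A B C D : LieIdeal K L} (h : Searrow K L A B C D) :
    Searrow K L A C B D :=
  ⟨h.1.trans (sup_comm _ _), (inf_comm _ _).trans h.2⟩

lemma IsChiefFactor.of_searrow {A B C D : LieIdeal K L} (h : IsChiefFactor K L A B)
    (hs : Searrow K L A B C D) : IsChiefFactor K L C D := by
  obtain ⟨rfl, rfl⟩ := hs
  exact isChiefFactor_iff_covBy.2 (inf_covBy_of_covBy_sup_left (isChiefFactor_iff_covBy.1 h))

lemma coe_sup_subset_iff {I J : LieIdeal K L} {M : LieSubalgebra K L} :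
    ((I ⊔ J : LieIdeal K L) : Set L) ⊆ M ↔ (I : Set L) ⊆ M ∧ (J : Set L) ⊆ M := by
  change LieSubmodule.toSubmodule (I ⊔ J) ≤ M.toSubmodule ↔
    LieSubmodule.toSubmodule I ≤ M.toSubmodule ∧ LieSubmodule.toSubmodule J ≤ M.toSubmodule
  rw [LieSubmodule.sup_toSubmodule, sup_le_iff]

def LieIdeal.sumSubalgebra (I : LieIdeal K L) (M : LieSubalgebra K L) : LieSubalgebra K L where
  toSubmodule := LieSubmodule.toSubmodule I ⊔ M.toSubmodule
  lie_mem' := by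
    intro x y hx hy
    obtain ⟨a', ha', m', hm', rfl⟩ := Submodule.mem_sup.1 hy
    obtain ⟨a, ha, m, hm, rfl⟩ := Submodule.mem_sup.1 hx
    rw [lie_add, add_lie a m m', ← add_assoc]
    exact add_mem (Submodule.mem_sup_left (add_mem (I.lie_mem ha') (lie_mem_left K L I a m' ha)))
      (Submodule.mem_sup_right (M.lie_mem hm hm'))

lemma LieIdeal.mem_sumSubalgebra {I : LieIdeal K L} {M : LieSubalgebra K L} {x : L} :
    x ∈ I.sumSubalgebra M ↔ ∃ a ∈ I, ∃ m ∈ M, a + m = x :=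
  Submodule.mem_sup

lemma exists_lieIdeal_coe_eq_inter {I W : LieIdeal K L} {N : LieSubalgebra K L}
    (hWN : SumIsTop K L W N) (hIW : ((I ⊓ W : LieIdeal K L) : Set L) ⊆ N) :
    ∃ J : LieIdeal K L, (J : Set L) = (I : Set L) ∩ N := by
  refine ⟨{ toSubmodule := LieSubmodule.toSubmodule I ⊓ N.toSubmodule, lie_mem := ?_ }, rfl⟩
  rintro x y ⟨hyI, hyN⟩
  obtain ⟨w, hw, n, hn, rfl⟩ := hWN x
  rw [add_lie]
  exact ⟨add_mem (I.lie_mem hyI) (I.lie_mem hyI),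
    add_mem (hIW ⟨I.lie_mem hyI, lie_mem_left K L W w y hw⟩) (N.lie_mem hn hyN)⟩

lemma not_subset_of_supplements {M : LieSubalgebra K L} {A B : LieIdeal K L}
    (hM : IsMaximalSubalgebra K L M) (h : Supplements K L M A B) : ¬ (A : Set L) ⊆ M := by
  refine fun hAM => hM.1 (eq_top_iff.2 fun x _ => ?_)
  obtain ⟨a, ha, m, hm, rfl⟩ := h.1 x
  exact M.add_mem (hAM ha) hm

variable (K L) in
/-- `A/B ⊆ φ(L/B)`; a Frattini chief factor is a chief factor with this property. -/
def InFrattini (A B : LieIdeal K L) : Prop :=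
  ∀ M : LieSubalgebra K L, IsMaximalSubalgebra K L M → (B : Set L) ⊆ M → (A : Set L) ⊆ M

variable {A B U V W X Y Z : LieIdeal K L}

lemma FrattiniFactor.inFrattini (h : FrattiniFactor K L A B) : InFrattini K L A B :=
  h.2

lemma MCrossing.inFrattini (h : MCrossing K L U V W X) : InFrattini K L U V :=
  h.2.2.2.1.2

lemma MCrossing.supplementedFactor (h : MCrossing K L U V W X) : SupplementedFactor K L W X :=
  h.2.2.2.2

lemma InFrattini.of_searrow (h : Searrow K L A B Y Z) (hY : InFrattini K L Y Z) :
    InFrattini K L A B := by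
  obtain ⟨rfl, rfl⟩ := h
  exact fun M hM hB =>
    coe_sup_subset_iff.2 ⟨hB, hY M hM ((SetLike.coe_subset_coe.2 inf_le_left).trans hB)⟩

lemma InFrattini.trans (hUV : InFrattini K L U V) (hVX : InFrattini K L V X) :
    InFrattini K L U X :=
  fun M hM hX => hUV M hM (hVX M hM hX)

lemma InFrattini.mono (hWU : W ≤ U) (h : InFrattini K L U X) : InFrattini K L W X :=
  fun M hM hX => (SetLike.coe_subset_coe.2 hWU).trans (h M hM hX)

lemma SupplementedFactor.not_inFrattini (h : SupplementedFactor K L A B) :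
    ¬ InFrattini K L A B := by
  obtain ⟨M, hM, hsup⟩ := h
  exact fun hF => not_subset_of_supplements hM hsup (hF M hM hsup.2.2)

lemma MCrossing.not_inFrattini (h : MCrossing K L U V W X) : ¬ InFrattini K L V X :=
  fun hVX => h.supplementedFactor.not_inFrattini
    ((h.inFrattini.trans hVX).mono (h.2.2.1.1 ▸ le_sup_right))

lemma IsChiefFactor.coe_inter_subset {N : LieSubalgebra K L} (hVX : IsChiefFactor K L V X)
    (hX : V ⊓ W = X) (hWN : SumIsTop K L W N) (hXN : (X : Set L) ⊆ N)
    (hVN : ¬ (V : Set L) ⊆ N) : (V : Set L) ∩ N ⊆ X := by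
  obtain ⟨J, hJ⟩ := exists_lieIdeal_coe_eq_inter hWN (hX ▸ hXN)
  have hXJ : X ≤ J := fun x hx => (Set.ext_iff.1 hJ x).2
    ⟨(SetLike.coe_subset_coe.2 (hX ▸ inf_le_left)) hx, hXN hx⟩
  have hJV : J ≤ V := fun x hx => ((Set.ext_iff.1 hJ x).1 hx).1
  rcases (isChiefFactor_iff_covBy.1 hVX).eq_or_eq hXJ hJV with rfl | rfl
  · exact hJ.symm.subset
  · exact absurd (hJ ▸ Set.inter_subset_right) hVN

lemma LieIdeal.sumSubalgebra_inf_eq_top [FiniteDimensional K L] {M N : LieSubalgebra K L}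
    (hM : IsMaximalSubalgebra K L M) (hVM : ¬ (V : Set L) ⊆ M) (hWM : (W : Set L) ⊆ M)
    (hWN : SumIsTop K L W N) (hWV : InFrattini K L W V) : V.sumSubalgebra (M ⊓ N) = ⊤ := by
  by_contra hS
  obtain ⟨M', hM', hSM'⟩ := (eq_top_or_exists_le_coatom (V.sumSubalgebra (M ⊓ N))).resolve_left hS
  have hVM' : (V : Set L) ⊆ M' := fun v hv =>
    hSM' (LieIdeal.mem_sumSubalgebra.2 ⟨v, hv, 0, zero_mem _, add_zero v⟩)
  have hMM' : M ≤ M' := by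
    intro m hm
    obtain ⟨w, hw, n, hn, rfl⟩ := hWN m
    have hnM : n ∈ M := by simpa using M.sub_mem hm (hWM hw)
    exact M'.add_mem (hWV M' hM' hVM' hw)
      (hSM' (LieIdeal.mem_sumSubalgebra.2 ⟨0, zero_mem _, n, ⟨hnM, hn⟩, zero_add n⟩))
  obtain rfl := (IsCoatom.le_iff_eq hM hM'.1).1 hMM'
  exact hVM hVM'

lemma LieIdeal.le_of_sumSubalgebra_inf_eq_top {M N : LieSubalgebra K L}
    (h : V.sumSubalgebra (M ⊓ N) = ⊤) (hVN : (V : Set L) ∩ N ⊆ M) : N ≤ M := by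
  intro n hn
  obtain ⟨v, hv, p, hp, rfl⟩ := LieIdeal.mem_sumSubalgebra.1 (h ▸ LieSubalgebra.mem_top n)
  have hvN : v ∈ N := by simpa using N.sub_mem hn hp.2
  exact M.add_mem (hVN ⟨hv, hvN⟩) hp.1

lemma MCrossing.inFrattini_of_isChiefFactor [FiniteDimensional K L]
    (hcr : MCrossing K L U V W X) (hUW : IsChiefFactor K L U W) : InFrattini K L U W := by
  have hUV := hcr.inFrattini
  obtain ⟨-, -, hs, -, N, hN, hNW⟩ := hcr
  have hWV : InFrattini K L W V := hUV.mono (hs.1 ▸ le_sup_right)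
  have hWN : ¬ (W : Set L) ⊆ N := not_subset_of_supplements hN hNW
  have hVN : ¬ (V : Set L) ⊆ N := fun h => hWN (hWV N hN h)
  have hVNX : (V : Set L) ∩ N ⊆ X :=
    (hUW.of_searrow hs.symm).coe_inter_subset hs.2 hNW.1 hNW.2.2 hVN
  have hXW : (X : Set L) ⊆ W := SetLike.coe_subset_coe.2 (hs.2 ▸ inf_le_right)
  intro M hM hWM
  rw [hs.1, coe_sup_subset_iff]
  refine ⟨?_, hWM⟩
  by_contra hVM
  have hNM : N ≤ M := V.le_of_sumSubalgebra_inf_eq_top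
    (V.sumSubalgebra_inf_eq_top hM hVM hWM hNW.1 hWV) (hVNX.trans (hXW.trans hWM))
  obtain rfl := (IsCoatom.le_iff_eq hN hM.1).1 hNM
  exact hWN hWM

end MRelated

theorem stmt11 (A B C D : LieIdeal K L)
    (hAB : IsChiefFactor K L A B) (hCD : IsChiefFactor K L C D)
    (hrel : MRelated K L A B C D) :
    (FrattiniFactor K L A B ↔ FrattiniFactor K L C D) := by
  rcases hrel with ⟨R, S, -, hRS, hA, hC⟩ | ⟨U, V, W, X, hcr, hA, hC⟩ |
    ⟨Y, Z, hYZ, hA, hC⟩ | ⟨U, V, W, X, hcr, hA, hC⟩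
  · exact iff_of_false (fun hF => hRS.not_inFrattini (hF.inFrattini.of_searrow hA))
      (fun hF => hRS.not_inFrattini (hF.inFrattini.of_searrow hC))
  · exact iff_of_false (fun hF => hcr.not_inFrattini (hF.inFrattini.of_searrow hA))
      (fun hF => hcr.supplementedFactor.not_inFrattini (hF.inFrattini.of_searrow hC))
  · exact iff_of_true ⟨hAB, hYZ.inFrattini.of_searrow hA⟩ ⟨hCD, hYZ.inFrattini.of_searrow hC⟩
  · exact iff_of_true ⟨hAB, hcr.inFrattini.of_searrow hA⟩
      ⟨hCD, (hcr.inFrattini_of_isChiefFactor (hCD.of_searrow hC)).of_searrow hC⟩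
end

section
/- Let L be a finite-dimensional Lie algebra and suppose the chief factors A/B and C/D of L are m-related and both supplemented. Then there exists a maximal subalgebra M of L which supplements both A/B and C/D. -/
variable {K : Type*} {L : Type*} [Field K] [LieRing L] [LieAlgebra K L]
variable [FiniteDimensional K L]

/-- The set `V + M` is a Lie subalgebra when `V` is an ideal and `M` a subalgebra. -/
def idealSupSubalg (V : LieIdeal K L) (M : LieSubalgebra K L) : LieSubalgebra K L where
  toSubmodule := (V : Submodule K L) ⊔ M.toSubmodule
  lie_mem' := by
    intro x y hx hy
    rcases Submodule.mem_sup.mp hx with ⟨v, hv, m, hm, rfl⟩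
    rcases Submodule.mem_sup.mp hy with ⟨v', hv', m', hm', rfl⟩
    have key : ⁅v + m, v' + m'⁆ = (⁅v + m, v'⁆ + ⁅v, m'⁆) + ⁅m, m'⁆ := by
      simp only [lie_add, add_lie]; abel
    rw [key]
    refine Submodule.add_mem _ (Submodule.mem_sup_left ?_) (Submodule.mem_sup_right ?_)
    · exact (V : Submodule K L).add_mem (V.lie_mem hv') (by
        rw [show ⁅v, m'⁆ = -⁅m', v⁆ from by rw [lie_skew]]; exact (V : Submodule K L).neg_mem (V.lie_mem hv))
    · exact M.lie_mem hm hm'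

lemma mem_idealSupSubalg {V : LieIdeal K L} {M : LieSubalgebra K L} {x : L} :
    x ∈ idealSupSubalg V M ↔ ∃ v ∈ V, ∃ m ∈ M, x = v + m := by
  constructor
  · intro hx
    rcases Submodule.mem_sup.mp hx with ⟨v, hv, m, hm, rfl⟩
    exact ⟨v, hv, m, hm, rfl⟩
  · rintro ⟨v, hv, m, hm, rfl⟩
    exact Submodule.add_mem _ (Submodule.mem_sup_left hv) (Submodule.mem_sup_right hm)

/-- Maximality dichotomy: either `V ⊆ M` or `L = V + M`. -/
lemma subset_or_sumIsTop (V : LieIdeal K L) (M : LieSubalgebra K L)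
    (hM : IsMaximalSubalgebra K L M) : (V : Set L) ⊆ M ∨ SumIsTop K L V M := by
  by_cases h : (V : Set L) ⊆ M
  · exact Or.inl h
  · right
    obtain ⟨v, hv, hvM⟩ := Set.not_subset.mp h
    have hle : M ≤ idealSupSubalg V M := fun m hm =>
      mem_idealSupSubalg.mpr ⟨0, V.zero_mem, m, hm, (zero_add m).symm⟩
    have hlt : M < idealSupSubalg V M := by
      refine lt_of_le_of_ne hle fun hEq => hvM ?_
      rw [hEq]
      exact mem_idealSupSubalg.mpr ⟨v, hv, 0, M.zero_mem, (add_zero v).symm⟩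
    have htop := hM.2 _ hlt
    intro x
    exact mem_idealSupSubalg.mp (htop ▸ LieSubalgebra.mem_top x : x ∈ idealSupSubalg V M)

/-- If `L = R + M`, `R = S ⊔ A` and `S ⊆ M`, then `L = A + M`. -/
lemma sumIsTop_of_searrow {R S A : LieIdeal K L} {M : LieSubalgebra K L}
    (hR : R = S ⊔ A) (hSM : (S : Set L) ⊆ M) (h : SumIsTop K L R M) :
    SumIsTop K L A M := by
  intro x
  obtain ⟨r, hr, m, hm, rfl⟩ := h x
  rw [hR] at hr
  obtain ⟨s, hs, a, ha, rfl⟩ := (LieSubmodule.mem_sup _ _ _).mp hr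
  exact ⟨a, ha, s + m, M.add_mem (hSM hs) hm, by abel⟩

/-- If `L = N + M` with `N ⊆ M`, then `M = ⊤`. -/
lemma eq_top_of_sumIsTop_subset {N : LieIdeal K L} {M : LieSubalgebra K L}
    (hNM : (N : Set L) ⊆ M) (h : SumIsTop K L N M) : M = ⊤ := by
  ext x
  simp only [LieSubalgebra.mem_top, iff_true]
  obtain ⟨n, hn, m, hm, rfl⟩ := h x
  exact M.add_mem (hNM hn) hm

/-- A supplemented chief factor cannot lie above a Frattini factor:
if `A/B ↘ Y/Z` with `Y/Z` Frattini and `A/B` supplemented, contradiction. -/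
lemma not_searrow_frattini_of_supplemented {A B Y Z : LieIdeal K L}
    (hYZ : FrattiniFactor K L Y Z) (hse : Searrow K L A B Y Z)
    (hs : SupplementedFactor K L A B) : False := by
  obtain ⟨M, hMmax, hsum, _, hBM⟩ := hs
  have hZB : Z ≤ B := hse.2 ▸ inf_le_left
  have hZM : (Z : Set L) ⊆ M := fun z hz => hBM (hZB hz)
  have hYM : (Y : Set L) ⊆ M := hYZ.2 M hMmax hZM
  have hAM : (A : Set L) ⊆ M := by
    intro a ha
    rw [hse.1] at ha
    obtain ⟨b, hb, y, hy, rfl⟩ := (LieSubmodule.mem_sup _ _ _).mp ha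
    exact M.add_mem (hBM hb) (hYM hy)
  exact hMmax.1 (eq_top_of_sumIsTop_subset hAM hsum)

theorem stmt12 (A B C D : LieIdeal K L)
    (hAB : IsChiefFactor K L A B) (hCD : IsChiefFactor K L C D)
    (hrel : MRelated K L A B C D)
    (hsAB : SupplementedFactor K L A B) (hsCD : SupplementedFactor K L C D) :
    ∃ M : LieSubalgebra K L, IsMaximalSubalgebra K L M ∧
      Supplements K L M A B ∧ Supplements K L M C D := by
  rcases hrel with ⟨R, S, _, hsup, hseA, hseC⟩ |
    ⟨U, V, W, X, ⟨hU, hW, hseUW, hFr, hWsup⟩, hseA, hseC⟩ |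
    ⟨Y, Z, hYZ, hseA, _⟩ | ⟨U, V, W, X, hcr, hseA, _⟩
  · -- Case 1: common supplemented factor `R/S` above both
    obtain ⟨M, hMmax, hsum, hSR, hSM⟩ := hsup
    refine ⟨M, hMmax, ?_, ?_⟩
    · exact ⟨sumIsTop_of_searrow hseA.1 hSM hsum,
        hseA.2 ▸ inf_le_right, fun b hb => hSM (hseA.2 ▸ hb : b ∈ S ⊓ A).1⟩
    · exact ⟨sumIsTop_of_searrow hseC.1 hSM hsum,
        hseC.2 ▸ inf_le_right, fun d hd => hSM (hseC.2 ▸ hd : d ∈ S ⊓ C).1⟩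
  · -- Case 2: m-crossing `[U/V ↘ W/X]` with `V/X ↘ A/B` and `W/X ↘ C/D`
    obtain ⟨M, hMmax, hsum, hXW, hXM⟩ := hWsup
    refine ⟨M, hMmax, ?_, ?_⟩
    · -- supplements `A/B`
      have hVM : SumIsTop K L V M := by
        rcases subset_or_sumIsTop V M hMmax with hVsub | h
        · exfalso
          have hUM : (U : Set L) ⊆ M := hFr.2 M hMmax hVsub
          have hWM : (W : Set L) ⊆ M := fun w hw =>
            hUM (hseUW.1 ▸ (le_sup_right : W ≤ V ⊔ W) hw)
          exact hMmax.1 (eq_top_of_sumIsTop_subset hWM hsum)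
        · exact h
      refine ⟨sumIsTop_of_searrow hseA.1 hXM hVM, hseA.2 ▸ inf_le_right,
        fun b hb => hXM (hseA.2 ▸ hb : b ∈ X ⊓ A).1⟩
    · -- supplements `C/D`
      exact ⟨sumIsTop_of_searrow hseC.1 hXM hsum, hseC.2 ▸ inf_le_right,
        fun d hd => hXM (hseC.2 ▸ hd : d ∈ X ⊓ C).1⟩
  · -- Case 3: impossible since `A/B` is supplemented
    exact absurd hsAB (fun h => not_searrow_frattini_of_supplemented hYZ hseA h)
  · -- Case 4: impossible since `A/B` is supplemented
    exact absurd hsAB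
      (fun h => not_searrow_frattini_of_supplemented hcr.2.2.2.1 hseA h)
end
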